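/- arXiv:1405.4006 — 3 statements merged into one kernel-verified Lean document; each statement's English description precedes it below -/
import Mathlib

section
/- Let A : X ⇒ X and B : X ⇒ X be maximally monotone operators that are both 3* monotone, and suppose that D = dom A − dom B is a linear subspace of X. Then ran(Id − T_{(A,B)}) ≃ ran(Id − T_{(B,A)}) and v_{(A,B)} = v_{(B,A)}. -/
open Set Pointwise

/-- Domain of a set-valued operator. -/
def svDom {X : Type*} (A : X → Set X) : Set X := {x | (A x).Nonempty}

/-- Range of a set-valued operator. -/
def svRan {X : Type*} (A : X → Set X) : Set X := ⋃ x, A x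

/-- Monotonicity of a set-valued operator. -/
def IsMonotoneOp {X : Type*} [NormedAddCommGroup X] [InnerProductSpace ℝ X]
    (A : X → Set X) : Prop :=
  ∀ ⦃x u y v : X⦄, u ∈ A x → v ∈ A y → 0 ≤ (inner ℝ (x - y) (u - v) : ℝ)

/-- Maximal monotonicity of a set-valued operator. -/
def IsMaxMonotoneOp {X : Type*} [NormedAddCommGroup X] [InnerProductSpace ℝ X]
    (A : X → Set X) : Prop :=
  IsMonotoneOp A ∧
    ∀ x u : X, (∀ y v : X, v ∈ A y → 0 ≤ (inner ℝ (x - y) (u - v) : ℝ)) → u ∈ A x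

/-- `A` is 3* monotone (rectangular): for every `x ∈ dom A` and `v ∈ ran A`, the set
`{⟪x - z, v - w⟫ : (z,w) ∈ gra A}` is bounded below. -/
def Is3StarMonotoneOp {X : Type*} [NormedAddCommGroup X] [InnerProductSpace ℝ X]
    (A : X → Set X) : Prop :=
  ∀ x ∈ svDom A, ∀ v ∈ svRan A,
    BddBelow {r : ℝ | ∃ z w : X, w ∈ A z ∧ r = (inner ℝ (x - z) (v - w) : ℝ)}

/-- Two sets are nearly equal if they have the same closure and the same relative
(intrinsic) interior. -/
def NearEq {X : Type*} [NormedAddCommGroup X] [NormedSpace ℝ X] (C D : Set X) : Prop :=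
  closure C = closure D ∧ intrinsicInterior ℝ C = intrinsicInterior ℝ D

/-- `J` is the resolvent of `A`: the single-valued, everywhere-defined map with
`x - J x ∈ A (J x)` for all `x`. -/
def IsResolventOf {X : Type*} [NormedAddCommGroup X] (J : X → X) (A : X → Set X) : Prop :=
  ∀ x : X, x - J x ∈ A (J x)

/-- The Douglas–Rachford operator `T = Id - J_A + J_B ∘ (2 J_A - Id)` built from
the resolvents `J_A` and `J_B`. -/
noncomputable def drT {X : Type*} [NormedAddCommGroup X] [NormedSpace ℝ X]
    (JA JB : X → X) : X → X :=
  fun x => x - JA x + JB ((2 : ℝ) • JA x - x)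

/-!
Write `F = Id - T` for a Douglas–Rachford operator `T`. Since `T` is nonexpansive, `F` is
monotone and continuous and each regularized equation `ε • x + F x = v` (`ε > 0`) has a
solution `x_ε`; `v` lies in `cl (ran F)` as soon as `ε * ‖x_ε‖ ^ 2` stays bounded.

Every `v ∈ ran (Id - T_{(B,A)})` lies in `(dom B - dom A) ∩ (ran A + ran B)`, which is
`(dom A - dom B) ∩ (ran A + ran B)` because `D` is a subspace. For such `v` the 3* monotonicity
of `A` and `B` bounds `ε * ‖x_ε‖ ^ 2`, so `v ∈ cl (ran (Id - T_{(A,B)}))`; by symmetry the two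
ranges have the same closure.

In finite dimension `ri (cl (ran F)) ⊆ ran F`: for `z` in the relative interior, either the
`x_ε` stay bounded and a cluster point solves `F x = z`, or a limit direction of the `x_ε` is a
unit normal to `cl (ran F)` at `z`, impossible at a relative interior point. This upgrades equal
closures to near equality. Finally `cl (ran F)` is midpoint convex, so its element of minimal
norm is unique.
-/

open Filter Topology
open scoped InnerProductSpace

section Resolvent

variable {X : Type*} [NormedAddCommGroup X] [InnerProductSpace ℝ X] {A B : X → Set X}
  {J JA JB : X → X}

theorem IsResolventOf.norm_sub_sq_le_inner (hA : IsMonotoneOp A) (hJ : IsResolventOf J A)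
    (x y : X) : ‖J x - J y‖ ^ 2 ≤ ⟪x - y, J x - J y⟫_ℝ := by
  have h := hA (hJ x) (hJ y)
  rw [show x - J x - (y - J y) = (x - y) - (J x - J y) by abel, inner_sub_right,
    real_inner_self_eq_norm_sq, real_inner_comm] at h
  linarith

theorem IsResolventOf.lipschitzWith_reflection (hA : IsMonotoneOp A) (hJ : IsResolventOf J A) :
    LipschitzWith 1 fun x => (2 : ℝ) • J x - x := by
  refine lipschitzWith_iff_norm_sub_le.2 fun x y => ?_
  rw [NNReal.coe_one, one_mul, ← sq_le_sq₀ (norm_nonneg _) (norm_nonneg _),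
    show (2 : ℝ) • J x - x - ((2 : ℝ) • J y - y) = (2 : ℝ) • (J x - J y) - (x - y) by module,
    norm_sub_sq_real, norm_smul, real_inner_smul_left, real_inner_comm]
  have := hJ.norm_sub_sq_le_inner hA x y
  norm_num
  nlinarith

theorem sub_drT_apply (JA JB : X → X) (x : X) :
    x - drT JA JB x = JA x - JB ((2 : ℝ) • JA x - x) := by
  simp only [drT]; abel

theorem lipschitzWith_drT (hA : IsMonotoneOp A) (hB : IsMonotoneOp B)
    (hJA : IsResolventOf JA A) (hJB : IsResolventOf JB B) : LipschitzWith 1 (drT JA JB) := by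
  set R : X → X := (fun y => (2 : ℝ) • JB y - y) ∘ fun x => (2 : ℝ) • JA x - x
  have hR : LipschitzWith (1 * 1) R :=
    (hJB.lipschitzWith_reflection hB).comp (hJA.lipschitzWith_reflection hA)
  have hdrT : drT JA JB = (fun x => (2⁻¹ : ℝ) • x) ∘ fun x => x + R x := by
    funext x; simp only [drT, R, Function.comp]; module
  have h : LipschitzWith _ ((fun x => (2⁻¹ : ℝ) • x) ∘ fun x => x + R x) :=
    (lipschitzWith_smul _).comp (LipschitzWith.id.add hR)
  rwa [← hdrT, show ‖(2⁻¹ : ℝ)‖₊ * (1 + 1 * 1) = 1 by ext; norm_num] at h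

theorem range_sub_drT_subset (hJA : IsResolventOf JA A) (hJB : IsResolventOf JB B) :
    range (fun x => x - drT JA JB x) ⊆ (svDom A - svDom B) ∩ (svRan A + svRan B) := by
  rintro _ ⟨x, rfl⟩
  dsimp only
  rw [sub_drT_apply]
  exact ⟨sub_mem_sub ⟨_, hJA x⟩ ⟨_, hJB _⟩,
    _, mem_iUnion_of_mem _ (hJA x), _, mem_iUnion_of_mem _ (hJB ((2 : ℝ) • JA x - x)), by module⟩

end Resolvent

section RegularizedEquation

variable {X : Type*} [NormedAddCommGroup X] [InnerProductSpace ℝ X] {F : X → X}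

theorem IsMonotoneOp.mul_sq_norm_le_of_smul_add_eq (hF : IsMonotoneOp fun x => {F x})
    {ε : ℝ} {x v : X} (hx : ε • x + F x = v) (u : X) :
    ε * ‖x‖ ^ 2 ≤ ⟪x - u, v - F u⟫_ℝ + ε * ⟪u, x⟫_ℝ := by
  have h : 0 ≤ ⟪x - u, F x - F u⟫_ℝ := hF rfl rfl
  rw [← hx]
  simp only [inner_sub_left, inner_sub_right, inner_add_right, real_inner_smul_right,
    real_inner_self_eq_norm_sq] at h ⊢
  linarith [real_inner_comm u x]

theorem IsMonotoneOp.norm_smul_le_of_smul_add_eq (hF : IsMonotoneOp fun x => {F x})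
    {ε : ℝ} (hε : 0 < ε) {x v : X} (hx : ε • x + F x = v) : ‖ε • x‖ ≤ ‖v - F 0‖ := by
  have h := hF.mul_sq_norm_le_of_smul_add_eq hx 0
  simp only [sub_zero, inner_zero_left, mul_zero, add_zero] at h
  rw [norm_smul, Real.norm_of_nonneg hε.le]
  rcases (norm_nonneg x).eq_or_lt with hx0 | hx0
  · rw [← hx0, mul_zero]; exact norm_nonneg _
  · refine le_of_mul_le_mul_left ?_ hx0
    nlinarith [real_inner_le_norm x (v - F 0)]

theorem mem_closure_range_of_mul_sq_norm_le (hsolve : ∀ ε : ℝ, 0 < ε → ∀ v, ∃ x, ε • x + F x = v)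
    {v : X} {K : ℝ} (hK : ∀ ε : ℝ, 0 < ε → ∀ x, ε • x + F x = v → ε * ‖x‖ ^ 2 ≤ K) :
    v ∈ closure (range F) := by
  refine Metric.mem_closure_iff.2 fun δ hδ => ?_
  set ε := δ ^ 2 / (|K| + 1)
  have hε : 0 < ε := by positivity
  obtain ⟨x, hx⟩ := hsolve ε hε v
  refine ⟨F x, mem_range_self x, ?_⟩
  have hsq : ‖ε • x‖ ^ 2 < δ ^ 2 :=
    calc ‖ε • x‖ ^ 2 = ε * (ε * ‖x‖ ^ 2) := by rw [norm_smul, Real.norm_of_nonneg hε.le]; ring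
      _ ≤ ε * |K| := mul_le_mul_of_nonneg_left ((hK ε hε x hx).trans (le_abs_self K)) hε.le
      _ < ε * (|K| + 1) := by gcongr; linarith
      _ = δ ^ 2 := by simp only [ε]; field_simp
  rw [dist_eq_norm, ← hx, add_sub_cancel_right]
  exact lt_of_pow_lt_pow_left₀ 2 hδ.le hsq

theorem IsMonotoneOp.midpoint_mem_closure_range (hF : IsMonotoneOp fun x => {F x})
    (hsolve : ∀ ε : ℝ, 0 < ε → ∀ v, ∃ x, ε • x + F x = v) (u₁ u₂ : X) :
    midpoint ℝ (F u₁) (F u₂) ∈ closure (range F) := by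
  set v := midpoint ℝ (F u₁) (F u₂)
  set d := v - F u₁
  have hd : v - F u₂ = -d := by
    simp only [v, d, midpoint_sub_left, midpoint_sub_right, ← smul_neg, neg_sub]
  refine mem_closure_range_of_mul_sq_norm_le hsolve
    (K := (⟪u₂ - u₁, d⟫_ℝ + ‖u₁ + u₂‖ * ‖v - F 0‖) / 2) fun ε hε x hx => ?_
  have h₁ := hF.mul_sq_norm_le_of_smul_add_eq hx u₁
  have h₂ := hF.mul_sq_norm_le_of_smul_add_eq hx u₂
  have hM := mul_le_mul_of_nonneg_left (hF.norm_smul_le_of_smul_add_eq hε hx)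
    (norm_nonneg (u₁ + u₂))
  have hu := real_inner_le_norm (u₁ + u₂) (ε • x)
  rw [hd] at h₂
  simp only [inner_sub_left, inner_neg_right, inner_add_left, real_inner_smul_right] at h₁ h₂ hu ⊢
  linarith

theorem IsMonotoneOp.midpoint_mem_closure_range_of_mem (hF : IsMonotoneOp fun x => {F x})
    (hsolve : ∀ ε : ℝ, 0 < ε → ∀ v, ∃ x, ε • x + F x = v) {u w : X} (hu : u ∈ closure (range F))
    (hw : w ∈ closure (range F)) : midpoint ℝ u w ∈ closure (range F) := by
  have hcont : Continuous (Function.uncurry (midpoint ℝ : X → X → X)) := by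
    have : Function.uncurry (midpoint ℝ : X → X → X) = fun p => (⅟2 : ℝ) • (p.1 + p.2) :=
      funext fun p => midpoint_eq_smul_add ℝ p.1 p.2
    rw [this]; fun_prop
  rw [← closure_closure (s := range F)]
  refine map_mem_closure₂ hcont hu hw ?_
  rintro _ ⟨u₁, rfl⟩ _ ⟨u₂, rfl⟩
  exact hF.midpoint_mem_closure_range hsolve u₁ u₂

end RegularizedEquation

theorem eq_of_forall_norm_le_of_midpoint_mem {E : Type*} [NormedAddCommGroup E] [NormedSpace ℝ E]
    [StrictConvexSpace ℝ E] {C : Set E} {u w : E} (hu : u ∈ C) (hw : w ∈ C)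
    (hmid : midpoint ℝ u w ∈ C) (hu_le : ∀ y ∈ C, ‖u‖ ≤ ‖y‖) (hw_le : ∀ y ∈ C, ‖w‖ ≤ ‖y‖) :
    u = w := by
  by_contra hne
  have hlt := (norm_midpoint_lt_iff ((hu_le w hw).antisymm (hw_le u hu))).2 hne
  rw [midpoint_eq_smul_add, invOf_eq_inv, inv_eq_one_div] at hmid
  exact (hu_le _ hmid).not_gt hlt

section IntrinsicInterior

variable {X : Type*} [NormedAddCommGroup X] [NormedSpace ℝ X] {K S : Set X}

theorem exists_pos_add_smul_sub_mem_of_mem_intrinsicInterior {z w : X}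
    (hz : z ∈ intrinsicInterior ℝ K) (hw : w ∈ K) : ∃ t : ℝ, 0 < t ∧ z + t • (z - w) ∈ K := by
  obtain ⟨z₀, hz₀, rfl⟩ := mem_intrinsicInterior.1 hz
  have hline (t : ℝ) : (z₀ : X) + t • ((z₀ : X) - w) ∈ affineSpan ℝ K := by
    simpa [vsub_eq_sub, vadd_eq_add, add_comm] using
      (affineSpan ℝ K).smul_vsub_vadd_mem t z₀.2 (subset_affineSpan ℝ K hw) z₀.2
  let c : ℝ → affineSpan ℝ K := fun t => ⟨_, hline t⟩
  have hc : Continuous c := by unfold c; fun_prop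
  have hc0 : c 0 = z₀ := Subtype.ext (by simp [c])
  have hev : ∀ᶠ t in 𝓝 (0 : ℝ), c t ∈ interior ((↑) ⁻¹' K) :=
    hc.continuousAt.preimage_mem_nhds (hc0 ▸ isOpen_interior.mem_nhds hz₀)
  obtain ⟨t, ht, ht0⟩ := ((hev.filter_mono nhdsWithin_le_nhds).and
    (self_mem_nhdsWithin : ∀ᶠ t in 𝓝[>] (0 : ℝ), 0 < t)).exists
  exact ⟨t, ht0, interior_subset (s := ((↑) : affineSpan ℝ K → X) ⁻¹' K) ht⟩

theorem inner_eq_zero_of_mem_intrinsicInterior {E : Type*} [NormedAddCommGroup E]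
    [InnerProductSpace ℝ E] {K : Set E} {z h : E} (hz : z ∈ intrinsicInterior ℝ K)
    (hK : ∀ w ∈ K, 0 ≤ ⟪h, z - w⟫_ℝ) {w : E} (hw : w ∈ K) : ⟪h, z - w⟫_ℝ = 0 := by
  obtain ⟨t, ht, htK⟩ := exists_pos_add_smul_sub_mem_of_mem_intrinsicInterior hz hw
  have h' := hK _ htK
  rw [sub_add_cancel_left, inner_neg_right, real_inner_smul_right] at h'
  nlinarith [hK w hw]

theorem intrinsicInterior_eq_of_intrinsicInterior_closure_subset [FiniteDimensional ℝ X]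
    (hS : intrinsicInterior ℝ (closure S) ⊆ S) :
    intrinsicInterior ℝ S = intrinsicInterior ℝ (closure S) := by
  have hspan : affineSpan ℝ S = affineSpan ℝ (closure S) :=
    (affineSpan_mono ℝ subset_closure).antisymm <| affineSpan_le.2 <|
      closure_minimal (subset_affineSpan ℝ S) (affineSpan ℝ S).closed_of_finiteDimensional
  unfold intrinsicInterior
  rw [hspan]
  refine congrArg _ ((interior_mono (preimage_mono subset_closure)).antisymm ?_)
  exact interior_maximal (fun y hy => hS ⟨y, hy, rfl⟩) isOpen_interior

theorem nearEq_of_closure_eq [FiniteDimensional ℝ X] {S T : Set X}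
    (hST : closure S = closure T) (hS : intrinsicInterior ℝ (closure S) ⊆ S)
    (hT : intrinsicInterior ℝ (closure T) ⊆ T) : NearEq S T :=
  ⟨hST, by rw [intrinsicInterior_eq_of_intrinsicInterior_closure_subset hS,
    intrinsicInterior_eq_of_intrinsicInterior_closure_subset hT, hST]⟩

end IntrinsicInterior

section RelativeInteriorOfRange

variable {X : Type*} [NormedAddCommGroup X] [InnerProductSpace ℝ X] [FiniteDimensional ℝ X]
  {F : X → X} {εs : ℕ → ℝ} {xs : ℕ → X} {z : X}

theorem mem_range_of_frequently_norm_le (hFc : Continuous F) (hε : Tendsto εs atTop (𝓝 0))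
    (hxs : ∀ n, εs n • xs n + F (xs n) = z) {c : ℝ} (hc : ∃ᶠ n in atTop, ‖xs n‖ ≤ c) :
    z ∈ range F := by
  obtain ⟨φ, hφ, hφc⟩ := extraction_of_frequently_atTop hc
  obtain ⟨x, -, ψ, hψ, hlim⟩ := tendsto_subseq_of_bounded (Metric.isBounded_closedBall (x := 0))
    fun k => mem_closedBall_zero_iff.2 (hφc k)
  have hεψ := hε.comp (hφ.comp hψ).tendsto_atTop
  have hFx (n : ℕ) : F (xs n) = z - εs n • xs n := eq_sub_of_add_eq' (hxs n)
  refine ⟨x, tendsto_nhds_unique ((hFc.tendsto x).comp hlim) ?_⟩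
  simpa [Function.comp_def, hFx] using tendsto_const_nhds.sub (hεψ.smul hlim)

theorem IsMonotoneOp.exists_inner_nonneg_of_tendsto_norm_atTop (hF : IsMonotoneOp fun x => {F x})
    (hε0 : ∀ n, 0 < εs n) (hε : Tendsto εs atTop (𝓝 0)) (hxs : ∀ n, εs n • xs n + F (xs n) = z)
    (hxs_top : Tendsto (fun n => ‖xs n‖) atTop atTop) :
    ∃ h : X, ‖h‖ = 1 ∧ h ∈ closure (range fun n => ‖xs n‖⁻¹ • xs n) ∧
      ∀ u, 0 ≤ ⟪h, z - F u⟫_ℝ := by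
  set g : ℕ → X := fun n => ‖xs n‖⁻¹ • xs n
  have hg_norm : ∀ᶠ n in atTop, ‖g n‖ = 1 := (hxs_top.eventually_gt_atTop 0).mono fun n hn => by
    rw [norm_smul, norm_inv, norm_norm, inv_mul_cancel₀ hn.ne']
  have hg_ball (n : ℕ) : g n ∈ Metric.closedBall (0 : X) 1 := by
    rw [mem_closedBall_zero_iff, norm_smul, norm_inv, norm_norm]
    exact inv_mul_le_one_of_le₀ le_rfl (norm_nonneg _)
  obtain ⟨h, -, ψ, hψ, hlim⟩ := tendsto_subseq_of_bounded Metric.isBounded_closedBall hg_ball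
  have hψ_top := hψ.tendsto_atTop
  refine ⟨h, tendsto_nhds_unique hlim.norm (tendsto_const_nhds.congr'
      ((hψ_top.eventually hg_norm).mono fun _ hk => hk.symm)),
    mem_closure_of_tendsto hlim (Eventually.of_forall fun k => mem_range_self (ψ k)), fun u => ?_⟩
  have hbound : ∀ᶠ n in atTop,
      0 ≤ ⟪g n, z - F u⟫_ℝ - ‖xs n‖⁻¹ * ⟪u, z - F u⟫_ℝ + εs n * ‖u‖ :=
    (hxs_top.eventually_gt_atTop 0).mono fun n hn => by
      have h₁ := hF.mul_sq_norm_le_of_smul_add_eq (hxs n) u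
      have h₂ := mul_le_mul_of_nonneg_left (real_inner_le_norm u (xs n)) (hε0 n).le
      have h₃ : 0 ≤ ‖xs n‖⁻¹ * (⟪xs n - u, z - F u⟫_ℝ + εs n * ‖u‖ * ‖xs n‖) :=
        mul_nonneg (inv_nonneg.2 hn.le) (by nlinarith [hε0 n])
      rwa [mul_add, inner_sub_left, mul_sub, ← real_inner_smul_left, mul_comm (εs n * ‖u‖),
        ← mul_assoc, inv_mul_cancel₀ hn.ne', one_mul] at h₃
  have hlim' : Tendsto (fun k => ⟪g (ψ k), z - F u⟫_ℝ - ‖xs (ψ k)‖⁻¹ * ⟪u, z - F u⟫_ℝ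
      + εs (ψ k) * ‖u‖) atTop (𝓝 (⟪h, z - F u⟫_ℝ - 0 * ⟪u, z - F u⟫_ℝ + 0 * ‖u‖)) :=
    ((hlim.inner tendsto_const_nhds).sub
      ((tendsto_inv_atTop_zero.comp (hxs_top.comp hψ_top)).mul_const _)).add
      ((hε.comp hψ_top).mul_const _)
  simpa using ge_of_tendsto hlim' (hψ_top.eventually hbound)

theorem IsMonotoneOp.intrinsicInterior_closure_range_subset (hF : IsMonotoneOp fun x => {F x})
    (hFc : Continuous F) (hsolve : ∀ ε : ℝ, 0 < ε → ∀ v, ∃ x, ε • x + F x = v) :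
    intrinsicInterior ℝ (closure (range F)) ⊆ range F := by
  intro z hz
  have hε0 (n : ℕ) : 0 < 1 / ((n : ℝ) + 1) := by positivity
  choose xs hxs using fun n => hsolve _ (hε0 n) z
  by_cases hbdd : ∃ c, ∃ᶠ n in atTop, ‖xs n‖ ≤ c
  · obtain ⟨c, hc⟩ := hbdd
    exact mem_range_of_frequently_norm_le hFc tendsto_one_div_add_atTop_nhds_zero_nat hxs hc
  push Not at hbdd
  obtain ⟨h, hh, hcl, hsep⟩ := hF.exists_inner_nonneg_of_tendsto_norm_atTop hε0
    tendsto_one_div_add_atTop_nhds_zero_nat hxs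
    (tendsto_atTop.2 fun c => (hbdd c).mono fun _ => le_of_lt)
  have hsep' : ∀ w ∈ closure (range F), 0 ≤ ⟪h, z - w⟫_ℝ :=
    fun _ hw => closure_minimal (t := {w | 0 ≤ ⟪h, z - w⟫_ℝ}) (range_subset_iff.2 hsep)
      (isClosed_le continuous_const (by fun_prop)) hw
  -- the normal `h` is orthogonal to every `xs n`, hence to its own approximants
  have horth (n : ℕ) : ⟪h, xs n⟫_ℝ = 0 := by
    have := inner_eq_zero_of_mem_intrinsicInterior hz hsep' (subset_closure (mem_range_self (xs n)))
    rw [← hxs n, add_sub_cancel_right, real_inner_smul_right] at this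
    exact (mul_eq_zero.1 this).resolve_left (hε0 n).ne'
  have hhh : ⟪h, h⟫_ℝ = 0 :=
    closure_minimal (t := {y | ⟪h, y⟫_ℝ = 0})
      (by rintro _ ⟨n, rfl⟩; simp [real_inner_smul_right, horth])
      (isClosed_eq (by fun_prop) continuous_const) hcl
  rw [real_inner_self_eq_norm_sq, hh] at hhh
  norm_num at hhh

end RelativeInteriorOfRange

namespace LipschitzWith

variable {X : Type*} [NormedAddCommGroup X] [InnerProductSpace ℝ X] {T : X → X}

theorem isMonotoneOp_id_sub (hT : LipschitzWith 1 T) : IsMonotoneOp fun x => {x - T x} := by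
  rintro x _ y _ rfl rfl
  have h := hT.norm_sub_le x y
  rw [NNReal.coe_one, one_mul] at h
  rw [show x - T x - (y - T y) = (x - y) - (T x - T y) by abel, inner_sub_right,
    real_inner_self_eq_norm_sq]
  nlinarith [real_inner_le_norm (x - y) (T x - T y), norm_nonneg (x - y)]

theorem exists_smul_add_sub_eq [CompleteSpace X] (hT : LipschitzWith 1 T) {ε : ℝ} (hε : 0 < ε)
    (v : X) : ∃ x, ε • x + (x - T x) = v := by
  have hΨ : ContractingWith ‖(1 + ε)⁻¹‖₊ fun x => (1 + ε)⁻¹ • (T x + v) := by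
    have h : LipschitzWith (‖(1 + ε)⁻¹‖₊ * (1 + 0)) fun x => (1 + ε)⁻¹ • (T x + v) :=
      (lipschitzWith_smul _).comp (hT.add (.const v))
    rw [add_zero, mul_one] at h
    refine ⟨?_, h⟩
    rw [← NNReal.coe_lt_coe, coe_nnnorm, NNReal.coe_one, Real.norm_of_nonneg (by positivity),
      inv_lt_one₀ (by positivity)]
    linarith
  have : Nonempty X := ⟨0⟩
  obtain ⟨x, hx⟩ : ∃ x, (1 + ε)⁻¹ • (T x + v) = x := ⟨_, hΨ.fixedPoint_isFixedPt⟩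
  refine ⟨x, ?_⟩
  rw [eq_sub_of_add_eq' ((inv_smul_eq_iff₀ (by positivity)).1 hx)]
  module

theorem intrinsicInterior_closure_range_id_sub_subset [FiniteDimensional ℝ X]
    (hT : LipschitzWith 1 T) :
    intrinsicInterior ℝ (closure (range fun x => x - T x)) ⊆ range fun x => x - T x :=
  hT.isMonotoneOp_id_sub.intrinsicInterior_closure_range_subset (continuous_id.sub hT.continuous)
    fun _ hε => hT.exists_smul_add_sub_eq hε

theorem midpoint_mem_closure_range_id_sub [CompleteSpace X] (hT : LipschitzWith 1 T) {u w : X}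
    (hu : u ∈ closure (range fun x => x - T x)) (hw : w ∈ closure (range fun x => x - T x)) :
    midpoint ℝ u w ∈ closure (range fun x => x - T x) :=
  hT.isMonotoneOp_id_sub.midpoint_mem_closure_range_of_mem
    (fun _ hε => hT.exists_smul_add_sub_eq hε) hu hw

end LipschitzWith

section DouglasRachford

variable {X : Type*} [NormedAddCommGroup X] [InnerProductSpace ℝ X] {A B : X → Set X}
  {JA JB : X → X}

theorem inter_subset_closure_range_sub_drT [CompleteSpace X] (hA : IsMonotoneOp A)
    (hB : IsMonotoneOp B) (hA3 : Is3StarMonotoneOp A) (hB3 : Is3StarMonotoneOp B)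
    (hJA : IsResolventOf JA A) (hJB : IsResolventOf JB B) :
    (svDom A - svDom B) ∩ (svRan A + svRan B) ⊆ closure (range fun x => x - drT JA JB x) := by
  rintro _ ⟨hvD, hvR⟩
  obtain ⟨a, ha, b, hb, rfl⟩ := mem_sub.1 hvD
  obtain ⟨a', ha', b', hb', hv'⟩ := mem_add.1 hvR
  obtain rfl : b' = a - b - a' := eq_sub_of_add_eq' hv'
  obtain ⟨CA, hCA⟩ := hA3 a ha a' ha'
  obtain ⟨CB, hCB⟩ := hB3 b hb _ hb'
  have hT := lipschitzWith_drT hA hB hJA hJB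
  refine mem_closure_range_of_mul_sq_norm_le (fun _ hε => hT.exists_smul_add_sub_eq hε)
    (K := ‖a + a'‖ * ‖a - b - (0 - drT JA JB 0)‖ - CA - CB) fun ε hε x hx => ?_
  set p := JA x
  have hq : JB ((2 : ℝ) • p - x) = p - (a - b) + ε • x := by
    rw [← hx, ← sub_sub_cancel p (JB _), ← sub_drT_apply]; abel
  have hAp : CA ≤ ⟪a - p, a' - (x - p)⟫_ℝ := hCA ⟨p, x - p, hJA x, rfl⟩
  have hBq : CB ≤ ⟪(a - p) - ε • x, (x - p - a') + ε • x⟫_ℝ := by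
    convert hCB ⟨_, _, hJB ((2 : ℝ) • p - x), rfl⟩ using 2 <;> rw [hq] <;> module
  have hsum : ⟪a - p, a' - (x - p)⟫_ℝ + ⟪(a - p) - ε • x, (x - p - a') + ε • x⟫_ℝ
      = ⟪a + a', ε • x⟫_ℝ - ε * ‖x‖ ^ 2 - ‖ε • x‖ ^ 2 := by
    have key (s t d : X) : ⟪s, -t⟫_ℝ + ⟪s - d, t + d⟫_ℝ = ⟪s - t, d⟫_ℝ - ‖d‖ ^ 2 := by
      simp only [inner_neg_right, inner_sub_left, inner_add_right, real_inner_self_eq_norm_sq,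
        real_inner_comm d t]
      ring
    rw [show a' - (x - p) = -(x - p - a') by abel, key,
      show a - p - (x - p - a') = a + a' - x by abel, inner_sub_left]
    simp only [real_inner_smul_right, real_inner_self_eq_norm_sq]
  have hM := mul_le_mul_of_nonneg_left
    (hT.isMonotoneOp_id_sub.norm_smul_le_of_smul_add_eq hε hx) (norm_nonneg (a + a'))
  nlinarith [real_inner_le_norm (a + a') (ε • x)]

end DouglasRachford

/-- For maximally monotone, 3* monotone `A, B`, if `D = dom A - dom B` is a linear
subspace of `X`, then `ran (Id - T_{(A,B)}) ≃ ran (Id - T_{(B,A)})` and the infimal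
displacement vectors coincide: `v_{(A,B)} = v_{(B,A)}`. -/
theorem nearEq_swap_and_infDisp_eq {X : Type*} [NormedAddCommGroup X]
    [InnerProductSpace ℝ X] [FiniteDimensional ℝ X] (A B : X → Set X)
    (hA : IsMaxMonotoneOp A) (hB : IsMaxMonotoneOp B)
    (hA3 : Is3StarMonotoneOp A) (hB3 : Is3StarMonotoneOp B)
    (JA JB : X → X) (hJA : IsResolventOf JA A) (hJB : IsResolventOf JB B)
    (hD : ∃ W : Submodule ℝ X, svDom A - svDom B = (W : Set X))
    (vAB vBA : X)
    (hvAB : vAB ∈ closure (Set.range fun x => x - drT JA JB x) ∧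
      ∀ w ∈ closure (Set.range fun x => x - drT JA JB x), ‖vAB‖ ≤ ‖w‖)
    (hvBA : vBA ∈ closure (Set.range fun x => x - drT JB JA x) ∧
      ∀ w ∈ closure (Set.range fun x => x - drT JB JA x), ‖vBA‖ ≤ ‖w‖) :
    NearEq (Set.range fun x => x - drT JA JB x)
        (Set.range fun x => x - drT JB JA x) ∧
      vAB = vBA := by
  obtain ⟨W, hW⟩ := hD
  have hdom : svDom B - svDom A = svDom A - svDom B := by rw [← neg_sub, hW, Submodule.neg_coe]
  have hran : svRan B + svRan A = svRan A + svRan B := add_comm _ _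
  have h₂₁ : (range fun x => x - drT JB JA x) ⊆ closure (range fun x => x - drT JA JB x) := by
    refine (range_sub_drT_subset hJB hJA).trans ?_
    rw [hdom, hran]
    exact inter_subset_closure_range_sub_drT hA.1 hB.1 hA3 hB3 hJA hJB
  have h₁₂ : (range fun x => x - drT JA JB x) ⊆ closure (range fun x => x - drT JB JA x) := by
    refine (range_sub_drT_subset hJA hJB).trans ?_
    rw [← hdom, ← hran]
    exact inter_subset_closure_range_sub_drT hB.1 hA.1 hB3 hA3 hJB hJA
  have hcl := (closure_minimal h₁₂ isClosed_closure).antisymm (closure_minimal h₂₁ isClosed_closure)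
  have hT₁ := lipschitzWith_drT hA.1 hB.1 hJA hJB
  have hT₂ := lipschitzWith_drT hB.1 hA.1 hJB hJA
  refine ⟨nearEq_of_closure_eq hcl hT₁.intrinsicInterior_closure_range_id_sub_subset
    hT₂.intrinsicInterior_closure_range_id_sub_subset, ?_⟩
  rw [← hcl] at hvBA
  exact eq_of_forall_norm_le_of_midpoint_mem hvAB.1 hvBA.1
    (hT₁.midpoint_mem_closure_range_id_sub hvAB.1 hvBA.1) hvAB.2 hvBA.2
end

section
/- Let U and V be nonempty closed convex subsets of X, let A = N_U and B = N_V be their normal cone operators, and let T_{(A,B)} = Id − P_U + P_V ∘ (2P_U − Id), where P_U and P_V are the metric projections onto U and V (the resolvents of N_U and N_V). Then ran(Id − T_{(A,B)}) ≃ (U − V) ∩ ((rec U)^⊖ + (rec V)^⊖). -/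
open Set Pointwise

/-- The normal cone operator of a set `U`: `N_U(x) = {u : ∀ y ∈ U, ⟪u, y - x⟫ ≤ 0}`
if `x ∈ U`, and `∅` otherwise. -/
def normalConeOp {X : Type*} [NormedAddCommGroup X] [InnerProductSpace ℝ X]
    (U : Set X) (x : X) : Set X :=
  {u : X | x ∈ U ∧ ∀ y ∈ U, (inner ℝ u (y - x) : ℝ) ≤ 0}

/-- The recession cone `rec C = {x : x + C ⊆ C}`. -/
def recCone {X : Type*} [AddCommGroup X] (C : Set X) : Set X :=
  {x : X | ∀ c ∈ C, x + c ∈ C}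

/-- The polar cone `K^⊖ = {u : ∀ k ∈ K, ⟪k, u⟫ ≤ 0}`. -/
def polarCone {X : Type*} [NormedAddCommGroup X] [InnerProductSpace ℝ X]
    (K : Set X) : Set X :=
  {u : X | ∀ k ∈ K, (inner ℝ k u : ℝ) ≤ 0}

/-- `P` is the metric projection onto `U`. -/
def IsMetricProjection {X : Type*} [NormedAddCommGroup X] (P : X → X) (U : Set X) : Prop :=
  ∀ x : X, P x ∈ U ∧ ∀ y ∈ U, ‖x - P x‖ ≤ ‖x - y‖

/-!
Write `C = ran (Id - T)` and `D = (U - V) ∩ ((rec U)^⊖ + (rec V)^⊖)`. With `y = 2 P_U x - x`,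
`x - T x = P_U x - P_V y = (x - P_U x) + (y - P_V y)` is a difference of points of `U` and `V`
and a sum of normal vectors to `U` and `V`; normal vectors to `U` lie in `(rec U)^⊖`, so `C ⊆ D`.

Conversely, `ri (U - V)` meets `ri ((rec U)^⊖ + (rec V)^⊖)` (a separating functional would give a
recession direction of `V` along which `U - V` escapes), so a point `w ∈ ri D` is `u - v = p + q`
with `p ∈ ri (rec U)^⊖`, `q ∈ ri (rec V)^⊖`. Such a `p` is normal to `U` at a maximizer of
`⟪p, ·⟫`: `U` is invariant under translations orthogonal to `span (rec U)^⊖`, and inside that span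
the superlevel sets of `⟪p, ·⟫` on `U` are compact because `p ∈ ri (rec U)^⊖`. For the solutions of
`(x - T x) + ε x = w`, the normal cone inequalities give `ε ‖x‖² ≤ const`, so `x - T x → w` as
`ε → 0` and `cl C = cl D`.

Finally `Id - T` is continuous and monotone since `T` is nonexpansive. If `w ∈ ri D` were not in
`C`, the solutions `x_ε` would diverge, and monotonicity makes their limiting direction `d` satisfy
`⟪w - z, d⟫ ≥ 0` on `cl C ⊇ D`, hence `= 0` as `w ∈ ri D`; but `x_ε` is a multiple of such a
`w - z`, forcing `d = 0`. So `ri D ⊆ C`, which with `cl C = cl D` gives `ri C = ri D`.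
-/

open Filter Topology
open scoped RealInnerProductSpace

section IntrinsicInterior

variable {X : Type*} [NormedAddCommGroup X] [NormedSpace ℝ X] {S T : Set X} {w y z : X}

theorem mem_intrinsicInterior_iff_dist :
    w ∈ intrinsicInterior ℝ S ↔
      w ∈ affineSpan ℝ S ∧ ∃ ε > 0, ∀ z ∈ affineSpan ℝ S, dist z w < ε → z ∈ S := by
  constructor
  · rintro ⟨y, hy, rfl⟩
    obtain ⟨ε, hε, hball⟩ := Metric.mem_nhds_iff.1 (mem_interior_iff_mem_nhds.1 hy)
    exact ⟨y.2, ε, hε, fun z hz hzy => @hball ⟨z, hz⟩ hzy⟩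
  · rintro ⟨hw, ε, hε, hball⟩
    refine ⟨⟨w, hw⟩, mem_interior_iff_mem_nhds.2 (Metric.mem_nhds_iff.2 ⟨ε, hε, ?_⟩), rfl⟩
    exact fun z hz => hball z z.2 hz

theorem exists_forall_dist_lt_mem_intrinsicInterior (hw : w ∈ intrinsicInterior ℝ S) :
    ∃ ε > 0, ∀ z ∈ affineSpan ℝ S, dist z w < ε → z ∈ intrinsicInterior ℝ S := by
  obtain ⟨y, hy, rfl⟩ := hw
  obtain ⟨ε, hε, hball⟩ := Metric.isOpen_iff.1 isOpen_interior y hy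
  exact ⟨ε, hε, fun z hz hzy => ⟨⟨z, hz⟩, hball hzy, rfl⟩⟩

theorem exists_pos_add_smul_sub_mem (hw : w ∈ intrinsicInterior ℝ S)
    (hz : z ∈ affineSpan ℝ S) : ∃ t : ℝ, 0 < t ∧ w + t • (w - z) ∈ S := by
  obtain ⟨hwS, ε, hε, hball⟩ := mem_intrinsicInterior_iff_dist.1 hw
  set t := ε / (2 * (‖w - z‖ + 1))
  have ht : 0 < t := by positivity
  refine ⟨t, ht, hball _ ?_ ?_⟩
  · simpa [vsub_eq_sub, vadd_eq_add, add_comm] using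
      AffineSubspace.smul_vsub_vadd_mem (affineSpan ℝ S) t hwS hz hwS
  · rw [dist_eq_norm, add_sub_cancel_left, norm_smul, Real.norm_of_nonneg ht.le,
      div_mul_eq_mul_div, div_lt_iff₀ (by positivity)]
    nlinarith [norm_nonneg (w - z)]

theorem intrinsicInterior_eq_interior_of_affineSpan_eq_top (h : affineSpan ℝ S = ⊤) :
    intrinsicInterior ℝ S = interior S := by
  ext w
  simp only [mem_intrinsicInterior_iff_dist, h, AffineSubspace.mem_top, true_implies, true_and,
    mem_interior_iff_mem_nhds, Metric.mem_nhds_iff, subset_def, Metric.mem_ball]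

theorem mem_openSegment_add_smul_sub {t : ℝ} (ht : 0 < t) :
    w ∈ openSegment ℝ y (w + t • (w - y)) := by
  refine ⟨t / (t + 1), 1 / (t + 1), by positivity, by positivity, by field_simp, ?_⟩
  match_scalars <;> field_simp <;> ring

theorem Convex.openSegment_subset_intrinsicInterior_of_mem (hS : Convex ℝ S)
    (hy : y ∈ intrinsicInterior ℝ S) (hz : z ∈ S) : openSegment ℝ y z ⊆ intrinsicInterior ℝ S := by
  rintro _ ⟨a, b, ha, hb, hab, rfl⟩
  obtain ⟨hyS, ε, hε, hball⟩ := mem_intrinsicInterior_iff_dist.1 hy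
  have hw : a • y + b • z = a • (y - z) + z := by rw [eq_sub_of_add_eq' hab]; module
  have hwS : a • y + b • z ∈ affineSpan ℝ S := by
    simpa [hw] using AffineSubspace.smul_vsub_vadd_mem _ a hyS (subset_affineSpan ℝ S hz)
      (subset_affineSpan ℝ S hz)
  refine mem_intrinsicInterior_iff_dist.2 ⟨hwS, a * ε, by positivity, fun u hu hdist => ?_⟩
  -- `u` is the same convex combination with `y` moved to a nearby point of `S`
  have hy' : y + a⁻¹ • (u - (a • y + b • z)) ∈ S := by
    refine hball _ ?_ ?_
    · simpa [add_comm] using AffineSubspace.smul_vsub_vadd_mem _ a⁻¹ hu hwS hyS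
    · rw [dist_eq_norm, add_sub_cancel_left, norm_smul, Real.norm_of_nonneg (by positivity),
        ← dist_eq_norm, inv_mul_lt_iff₀ ha]
      exact hdist
  have hu : u = a • (y + a⁻¹ • (u - (a • y + b • z))) + b • z := by
    rw [smul_add, smul_smul, mul_inv_cancel₀ ha.ne', one_smul]
    abel
  exact hu ▸ hS hy' hz ha.le hb.le hab

protected theorem Convex.intrinsicInterior (hS : Convex ℝ S) :
    Convex ℝ (intrinsicInterior ℝ S) :=
  convex_iff_openSegment_subset.2 fun _ hy _ hz =>
    hS.openSegment_subset_intrinsicInterior_of_mem hy (intrinsicInterior_subset hz)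

variable [FiniteDimensional ℝ X]

theorem closure_subset_affineSpan : closure S ⊆ affineSpan ℝ S :=
  closure_minimal (subset_affineSpan ℝ S) (affineSpan ℝ S).closed_of_finiteDimensional

theorem affineSpan_closure : affineSpan ℝ (closure S) = affineSpan ℝ S :=
  le_antisymm (affineSpan_le.2 closure_subset_affineSpan) (affineSpan_mono ℝ subset_closure)

theorem intrinsicInterior_eq_of_subset_of_closure_eq (hST : S ⊆ T)
    (hcl : closure S = closure T) (hri : intrinsicInterior ℝ T ⊆ S) :
    intrinsicInterior ℝ S = intrinsicInterior ℝ T := by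
  have hspan : affineSpan ℝ S = affineSpan ℝ T := by
    rw [← affineSpan_closure, hcl, affineSpan_closure]
  ext w
  constructor
  · intro hw
    obtain ⟨hwS, ε, hε, hball⟩ := mem_intrinsicInterior_iff_dist.1 hw
    rw [hspan] at hwS hball
    exact mem_intrinsicInterior_iff_dist.2 ⟨hwS, ε, hε, fun z hz hzw => hST (hball z hz hzw)⟩
  · intro hw
    obtain ⟨ε, hε, hball⟩ := exists_forall_dist_lt_mem_intrinsicInterior hw
    refine mem_intrinsicInterior_iff_dist.2 ⟨subset_affineSpan ℝ S (hri hw), ε, hε, ?_⟩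
    exact fun z hz hzw => hri (hball z (hspan ▸ hz) hzw)

theorem Convex.openSegment_subset_intrinsicInterior (hS : Convex ℝ S)
    (hy : y ∈ intrinsicInterior ℝ S) (hz : z ∈ closure S) :
    openSegment ℝ y z ⊆ intrinsicInterior ℝ S := by
  rintro _ ⟨a, b, ha, hb, hab, rfl⟩
  obtain ⟨ε, hε, hball⟩ := exists_forall_dist_lt_mem_intrinsicInterior hy
  obtain ⟨z', hz'S, hzz'⟩ := Metric.mem_closure_iff.1 hz (a * ε / b) (by positivity)
  -- trade `z ∈ closure S` for `z' ∈ S`, moving `y` slightly inside the relative interior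
  have hy' : y + (b / a) • (z - z') ∈ intrinsicInterior ℝ S := by
    refine hball _ ?_ ?_
    · simpa [add_comm] using AffineSubspace.smul_vsub_vadd_mem _ (b / a)
        (closure_subset_affineSpan hz) (subset_affineSpan ℝ S hz'S)
        (subset_affineSpan ℝ S (intrinsicInterior_subset hy))
    · rw [dist_eq_norm, add_sub_cancel_left, norm_smul, Real.norm_of_nonneg (by positivity),
        ← dist_eq_norm]
      calc b / a * dist z z' < b / a * (a * ε / b) := by gcongr
        _ = ε := by field_simp
  have hw : a • y + b • z = a • (y + (b / a) • (z - z')) + b • z' := by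
    rw [smul_add, smul_smul, mul_div_cancel₀ _ ha.ne']
    module
  exact hw ▸ hS.openSegment_subset_intrinsicInterior_of_mem hy' hz'S ⟨a, b, ha, hb, hab, rfl⟩

theorem Convex.closure_inter_subset_closure_intrinsicInterior_inter (hS : Convex ℝ S)
    (hT : Convex ℝ T) (hq : (intrinsicInterior ℝ S ∩ intrinsicInterior ℝ T).Nonempty) :
    closure (S ∩ T) ⊆ closure (intrinsicInterior ℝ S ∩ intrinsicInterior ℝ T) := by
  obtain ⟨q, hqS, hqT⟩ := hq
  intro z hz
  have hseg : openSegment ℝ q z ⊆ intrinsicInterior ℝ S ∩ intrinsicInterior ℝ T :=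
    subset_inter (hS.openSegment_subset_intrinsicInterior hqS (closure_mono inter_subset_left hz))
      (hT.openSegment_subset_intrinsicInterior hqT (closure_mono inter_subset_right hz))
  refine closure_mono hseg ?_
  rw [closure_openSegment]
  exact right_mem_segment ℝ q z

theorem Convex.closure_intrinsicInterior (hS : Convex ℝ S) :
    closure (intrinsicInterior ℝ S) = closure S := by
  rcases S.eq_empty_or_nonempty with rfl | hne
  · simp
  obtain ⟨q, hq⟩ := hne.intrinsicInterior hS
  refine (closure_mono intrinsicInterior_subset).antisymm ?_
  simpa using hS.closure_inter_subset_closure_intrinsicInterior_inter hS ⟨q, hq, hq⟩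

theorem Convex.intrinsicInterior_closure (hS : Convex ℝ S) :
    intrinsicInterior ℝ (closure S) = intrinsicInterior ℝ S := by
  rcases S.eq_empty_or_nonempty with rfl | hne
  · simp
  obtain ⟨y, hy⟩ := hne.intrinsicInterior hS
  have hyS : y ∈ affineSpan ℝ (closure S) :=
    affineSpan_closure (S := S) ▸ subset_affineSpan ℝ S (intrinsicInterior_subset hy)
  have h : intrinsicInterior ℝ (closure S) ⊆ intrinsicInterior ℝ S := fun w hw => by
    obtain ⟨t, ht, hmem⟩ := exists_pos_add_smul_sub_mem hw hyS
    exact hS.openSegment_subset_intrinsicInterior hy hmem (mem_openSegment_add_smul_sub ht)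
  exact (intrinsicInterior_eq_of_subset_of_closure_eq subset_closure closure_closure.symm
    (h.trans intrinsicInterior_subset)).symm

theorem Convex.intrinsicInterior_eq_of_closure_eq (hS : Convex ℝ S) (hT : Convex ℝ T)
    (h : closure S = closure T) : intrinsicInterior ℝ S = intrinsicInterior ℝ T := by
  rw [← hS.intrinsicInterior_closure, h, hT.intrinsicInterior_closure]

theorem Convex.intrinsicInterior_inter_subset (hS : Convex ℝ S) (hT : Convex ℝ T)
    (hq : (intrinsicInterior ℝ S ∩ intrinsicInterior ℝ T).Nonempty) :
    intrinsicInterior ℝ (S ∩ T) ⊆ intrinsicInterior ℝ S ∩ intrinsicInterior ℝ T := by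
  have hcl : closure (S ∩ T) = closure (intrinsicInterior ℝ S ∩ intrinsicInterior ℝ T) :=
    (hS.closure_inter_subset_closure_intrinsicInterior_inter hT hq).antisymm
      (closure_mono (inter_subset_inter intrinsicInterior_subset intrinsicInterior_subset))
  rw [(hS.inter hT).intrinsicInterior_eq_of_closure_eq
    (hS.intrinsicInterior.inter hT.intrinsicInterior) hcl]
  exact intrinsicInterior_subset

theorem Convex.intrinsicInterior_add_subset (hS : Convex ℝ S) (hT : Convex ℝ T)
    (hSne : S.Nonempty) (hTne : T.Nonempty) :
    intrinsicInterior ℝ (S + T) ⊆ intrinsicInterior ℝ S + intrinsicInterior ℝ T := by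
  intro w hw
  obtain ⟨a₀, ha₀⟩ := hSne.intrinsicInterior hS
  obtain ⟨b₀, hb₀⟩ := hTne.intrinsicInterior hT
  have hab₀ : a₀ + b₀ ∈ affineSpan ℝ (S + T) := subset_affineSpan ℝ _
    (add_mem_add (intrinsicInterior_subset ha₀) (intrinsicInterior_subset hb₀))
  obtain ⟨t, ht, a₁, ha₁, b₁, hb₁, hab₁⟩ := exists_pos_add_smul_sub_mem hw hab₀
  obtain ⟨p, q, hp, hq, hpq, hpqw⟩ := mem_openSegment_add_smul_sub (w := w) (y := a₀ + b₀) ht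
  rw [← hab₁] at hpqw
  refine ⟨_, hS.openSegment_subset_intrinsicInterior_of_mem ha₀ ha₁ ⟨p, q, hp, hq, hpq, rfl⟩,
    _, hT.openSegment_subset_intrinsicInterior_of_mem hb₀ hb₁ ⟨p, q, hp, hq, hpq, rfl⟩, ?_⟩
  rw [← hpqw]
  module

end IntrinsicInterior

section Separation

variable {X : Type*} [NormedAddCommGroup X] [InnerProductSpace ℝ X] {S T : Set X}

theorem inner_sub_eq_zero_of_mem_intrinsicInterior {w d : X} (hw : w ∈ intrinsicInterior ℝ S)
    (h : ∀ z ∈ S, 0 ≤ ⟪w - z, d⟫) {z : X} (hz : z ∈ S) : ⟪w - z, d⟫ = 0 := by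
  obtain ⟨t, ht, hmem⟩ := exists_pos_add_smul_sub_mem hw (subset_affineSpan ℝ S hz)
  have h' := h _ hmem
  rw [sub_add_cancel_left, inner_neg_left, real_inner_smul_left] at h'
  nlinarith [h z hz]

variable [FiniteDimensional ℝ X]

theorem Convex.exists_ne_zero_inner_nonpos_of_zero_notMem_intrinsicInterior (hS : Convex ℝ S)
    (hne : S.Nonempty) (h0 : (0 : X) ∉ intrinsicInterior ℝ S) :
    ∃ φ : X, φ ≠ 0 ∧ ∀ s ∈ S, ⟪φ, s⟫ ≤ 0 := by
  by_cases htop : affineSpan ℝ S = ⊤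
  · rw [intrinsicInterior_eq_interior_of_affineSpan_eq_top htop] at h0
    have hint : (interior S).Nonempty := by
      rw [← intrinsicInterior_eq_interior_of_affineSpan_eq_top htop]
      exact hne.intrinsicInterior hS
    obtain ⟨f, hf0, hf⟩ := geometric_hahn_banach_of_nonempty_interior_point hS h0 hint
    refine ⟨(InnerProductSpace.toDual ℝ X).symm f, by simpa using hf0, fun s hs => ?_⟩
    simpa [InnerProductSpace.toDual_symm_apply] using hf s hs
  · -- `S` lies in a proper affine subspace, on which a normal vector has constant inner product
    obtain ⟨s₀, hs₀⟩ := hne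
    have hdir : (affineSpan ℝ S).direction ≠ ⊤ := by
      rwa [Ne, AffineSubspace.direction_eq_top_iff_of_nonempty
        ((affineSpan_nonempty ℝ).2 ⟨s₀, hs₀⟩)]
    obtain ⟨ψ, hψ, hψ0⟩ :=
      (Submodule.ne_bot_iff _).1 (mt Submodule.orthogonal_eq_bot_iff.1 hdir)
    have hconst : ∀ s ∈ S, ⟪ψ, s⟫ = ⟪ψ, s₀⟫ := fun s hs => by
      have := Submodule.inner_left_of_mem_orthogonal
        (AffineSubspace.vsub_mem_direction (subset_affineSpan ℝ S hs)
          (subset_affineSpan ℝ S hs₀)) hψ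
      rwa [vsub_eq_sub, inner_sub_right, sub_eq_zero] at this
    rcases le_total ⟪ψ, s₀⟫ 0 with hle | hle
    · exact ⟨ψ, hψ0, fun s hs => (hconst s hs).trans_le hle⟩
    · refine ⟨-ψ, neg_ne_zero.2 hψ0, fun s hs => ?_⟩
      rw [inner_neg_left, hconst s hs]
      exact neg_nonpos.2 hle

theorem Convex.exists_ne_zero_inner_le_of_disjoint_intrinsicInterior (hS : Convex ℝ S)
    (hT : Convex ℝ T) (hSne : S.Nonempty) (hTne : T.Nonempty)
    (h : Disjoint (intrinsicInterior ℝ S) (intrinsicInterior ℝ T)) :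
    ∃ φ : X, φ ≠ 0 ∧ ∀ s ∈ S, ∀ t ∈ T, ⟪φ, s⟫ ≤ ⟪φ, t⟫ := by
  set R := intrinsicInterior ℝ S - intrinsicInterior ℝ T
  have hR0 : (0 : X) ∉ intrinsicInterior ℝ R := fun h0 => by
    obtain ⟨s, hs, t, ht, hst⟩ := intrinsicInterior_subset h0
    exact h.ne_of_mem hs ht (sub_eq_zero.1 hst)
  obtain ⟨φ, hφ0, hφ⟩ := (hS.intrinsicInterior.sub hT.intrinsicInterior)
    |>.exists_ne_zero_inner_nonpos_of_zero_notMem_intrinsicInterior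
      ((hSne.intrinsicInterior hS).sub (hTne.intrinsicInterior hT)) hR0
  refine ⟨φ, hφ0, fun s hs t ht => ?_⟩
  have hst : s - t ∈ closure R := map_mem_closure₂ continuous_sub
    (hS.closure_intrinsicInterior ▸ subset_closure hs)
    (hT.closure_intrinsicInterior ▸ subset_closure ht) fun a ha b hb => sub_mem_sub ha hb
  have : ⟪φ, s - t⟫ ≤ 0 := closure_minimal (t := {x | ⟪φ, x⟫ ≤ 0}) hφ
    (isClosed_le (continuous_const.inner continuous_id) continuous_const) hst
  rw [inner_sub_right] at this
  linarith

end Separation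

section RecessionCone

variable {E : Type*} [AddCommGroup E] {C : Set E} {e : E}

theorem zero_mem_recCone (C : Set E) : (0 : E) ∈ recCone C := fun c hc => by simpa using hc

theorem add_mem_recCone {e' : E} (he : e ∈ recCone C) (he' : e' ∈ recCone C) :
    e + e' ∈ recCone C := fun c hc => add_assoc e e' c ▸ he _ (he' c hc)

theorem add_natCast_smul_mem_of_mem_recCone [Module ℝ E] (he : e ∈ recCone C) {c : E}
    (hc : c ∈ C) (n : ℕ) : c + (n : ℝ) • e ∈ C := by
  induction n with
  | zero => simpa using hc
  | succ n ih => simpa [add_smul, add_comm, add_left_comm] using he _ ih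

theorem Convex.recCone [Module ℝ E] (hC : Convex ℝ C) : Convex ℝ (recCone C) := by
  intro e he e' he' a b ha hb hab c hc
  convert hC (he c hc) (he' c hc) ha hb hab using 1
  rw [smul_add, smul_add, ← add_add_add_comm, ← add_smul, hab, one_smul]

theorem IsClosed.recCone [TopologicalSpace E] [ContinuousAdd E] (hC : IsClosed C) :
    IsClosed (recCone C) := by
  have : _root_.recCone C = ⋂ c ∈ C, (· + c) ⁻¹' C := by ext; simp [_root_.recCone]
  rw [this]
  exact isClosed_biInter fun c _ => hC.preimage (continuous_add_const c)

theorem mem_recCone_of_tendsto_inv_norm_smul {X : Type*} [NormedAddCommGroup X]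
    [NormedSpace ℝ X] {C : Set X} (hcl : IsClosed C) (hconv : Convex ℝ C) {u : ℕ → X} {e : X}
    (hu : ∀ n, u n ∈ C) (hnorm : Tendsto (‖u ·‖) atTop atTop)
    (he : Tendsto (fun n => ‖u n‖⁻¹ • u n) atTop (𝓝 e)) : e ∈ recCone C := by
  intro c hc
  have hinv : Tendsto (‖u ·‖⁻¹) atTop (𝓝 0) := hnorm.inv_tendsto_atTop
  have hlim : Tendsto (fun n => c + (‖u n‖⁻¹ • u n - ‖u n‖⁻¹ • c)) atTop (𝓝 (e + c)) := by
    simpa [add_comm] using tendsto_const_nhds.add (he.sub (hinv.smul_const c))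
  refine hcl.mem_of_tendsto hlim ((hnorm.eventually_ge_atTop 1).mono fun n hn => ?_)
  have h0 : 0 ≤ ‖u n‖⁻¹ := inv_nonneg.2 (norm_nonneg _)
  have h1 : ‖u n‖⁻¹ ≤ 1 := inv_le_one_of_one_le₀ hn
  convert hconv hc (hu n) (sub_nonneg.2 h1) h0 (sub_add_cancel _ _) using 1
  module

end RecessionCone

theorem exists_subseq_tendsto_inv_norm_smul {X : Type*} [NormedAddCommGroup X]
    [NormedSpace ℝ X] [FiniteDimensional ℝ X] {u : ℕ → X} (hu : ∀ n, u n ≠ 0) :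
    ∃ e : X, ‖e‖ = 1 ∧ ∃ φ : ℕ → ℕ, StrictMono φ ∧
      Tendsto (fun n => ‖u (φ n)‖⁻¹ • u (φ n)) atTop (𝓝 e) := by
  obtain ⟨e, he, φ, hφ, hlim⟩ := (isCompact_sphere (0 : X) 1).tendsto_subseq
    (x := fun n => ‖u n‖⁻¹ • u n) fun n => by simpa using norm_smul_inv_norm (𝕜 := ℝ) (hu n)
  exact ⟨e, by simpa using he, φ, hφ, hlim⟩

section PolarCone

variable {X : Type*} [NormedAddCommGroup X] [InnerProductSpace ℝ X] {K : Set X}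

theorem zero_mem_polarCone (K : Set X) : (0 : X) ∈ polarCone K := fun k _ => by simp

theorem smul_mem_polarCone {k : X} (hk : k ∈ polarCone K) {t : ℝ} (ht : 0 ≤ t) :
    t • k ∈ polarCone K := fun r hr => by
  rw [real_inner_smul_right]
  exact mul_nonpos_of_nonneg_of_nonpos ht (hk r hr)

theorem natCast_smul_mem_polarCone_add_polarCone {K L : Set X} {k : X}
    (hk : k ∈ polarCone K + polarCone L) (n : ℕ) : (n : ℝ) • k ∈ polarCone K + polarCone L := by
  obtain ⟨k₁, hk₁, k₂, hk₂, rfl⟩ := hk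
  exact ⟨_, smul_mem_polarCone hk₁ n.cast_nonneg, _, smul_mem_polarCone hk₂ n.cast_nonneg,
    (smul_add _ _ _).symm⟩

theorem convex_polarCone (K : Set X) : Convex ℝ (polarCone K) := by
  intro x hx y hy a b ha hb _ k hk
  rw [inner_add_right, real_inner_smul_right, real_inner_smul_right]
  nlinarith [hx k hk, hy k hk]

theorem polarCone_polarCone_subset [CompleteSpace X] {R : Set X} (hcl : IsClosed R)
    (hconv : Convex ℝ R) (h0 : (0 : X) ∈ R) (hadd : ∀ x ∈ R, ∀ y ∈ R, x + y ∈ R) :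
    polarCone (polarCone R) ⊆ R := by
  intro x hx
  by_contra hxR
  obtain ⟨p, hp, hpx⟩ := exists_norm_eq_iInf_of_complete_convex ⟨0, h0⟩ hcl.isComplete hconv x
  have hproj := (norm_eq_iInf_iff_real_inner_le_zero hconv hp).1 hpx
  -- testing the projection inequality at `0` and `2 p` shows `x - p ⊥ p`, so `x - p ∈ polar R`
  have hφp : ⟪x - p, p⟫ = 0 := by
    have h1 := hproj 0 h0
    have h2 := hproj (p + p) (hadd p hp p hp)
    rw [zero_sub, inner_neg_right] at h1
    rw [add_sub_cancel_right] at h2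
    linarith
  have hφ : x - p ∈ polarCone R := fun y hy => by
    have := hproj y hy
    rw [inner_sub_right, hφp, sub_zero] at this
    rwa [real_inner_comm]
  have hxx : ⟪x - p, x - p⟫ ≤ 0 := by
    rw [inner_sub_right, hφp, sub_zero]
    exact hx _ hφ
  exact hxR (sub_eq_zero.1 (real_inner_self_nonpos.1 hxx) ▸ hp)

theorem inner_eq_zero_of_mem_intrinsicInterior_polarCone {p e : X}
    (hp : p ∈ intrinsicInterior ℝ (polarCone K)) (he : e ∈ K) (hpe : 0 ≤ ⟪p, e⟫) {k : X}
    (hk : k ∈ polarCone K) : ⟪k, e⟫ = 0 := by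
  have hpk : ∀ k ∈ polarCone K, ⟪p - k, e⟫ = 0 :=
    fun _ => inner_sub_eq_zero_of_mem_intrinsicInterior hp fun k hk => by
      rw [inner_sub_left]
      linarith [hk e he, real_inner_comm k e]
  have h0 := hpk 0 (zero_mem_polarCone K)
  have h := hpk k hk
  rw [sub_zero] at h0
  rw [inner_sub_left, h0] at h
  linarith

theorem polarCone_polarCone_recCone_subset [CompleteSpace X] {C : Set X} (hcl : IsClosed C)
    (hconv : Convex ℝ C) : polarCone (polarCone (recCone C)) ⊆ recCone C :=
  polarCone_polarCone_subset hcl.recCone hconv.recCone (zero_mem_recCone C)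
    fun _ hx _ hy => add_mem_recCone hx hy

end PolarCone

section NormalConeRange

variable {X : Type*} [NormedAddCommGroup X] [InnerProductSpace ℝ X] [FiniteDimensional ℝ X]
  {U : Set X}

theorem orthogonal_span_polarCone_recCone_subset (hcl : IsClosed U) (hconv : Convex ℝ U) :
    ((Submodule.span ℝ (polarCone (recCone U)))ᗮ : Set X) ⊆ recCone U := fun _ he =>
  polarCone_polarCone_recCone_subset hcl hconv fun _ hk =>
    (Submodule.inner_right_of_mem_orthogonal (Submodule.subset_span hk) he).le

theorem isBounded_inter_span_polarCone_recCone_inter (hcl : IsClosed U) (hconv : Convex ℝ U)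
    {p : X} (hp : p ∈ intrinsicInterior ℝ (polarCone (recCone U))) (c : ℝ) :
    Bornology.IsBounded
      (U ∩ (Submodule.span ℝ (polarCone (recCone U)) : Set X) ∩ {y | c ≤ ⟪p, y⟫}) := by
  set W := Submodule.span ℝ (polarCone (recCone U))
  rw [isBounded_iff_forall_norm_le]
  by_contra! hunb
  choose u hu hun using fun n : ℕ => hunb n
  have hnorm : Tendsto (‖u ·‖) atTop atTop :=
    tendsto_atTop_mono (fun n => (hun n).le) tendsto_natCast_atTop_atTop
  obtain ⟨e, he1, φ, hφ, hlim⟩ := exists_subseq_tendsto_inv_norm_smul fun n =>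
    norm_pos_iff.1 ((Nat.cast_nonneg n).trans_lt (hun n))
  have hnormφ := hnorm.comp hφ.tendsto_atTop
  have heU : e ∈ recCone U := mem_recCone_of_tendsto_inv_norm_smul hcl hconv
    (fun n => (hu (φ n)).1.1) hnormφ hlim
  have heW : e ∈ W := W.closed_of_finiteDimensional.mem_of_tendsto hlim
    (Eventually.of_forall fun n => W.smul_mem _ (hu (φ n)).1.2)
  have hpe : 0 ≤ ⟪p, e⟫ := by
    refine le_of_tendsto_of_tendsto (by simpa using hnormφ.inv_tendsto_atTop.mul_const c)
      (((continuous_const.inner continuous_id).tendsto e).comp hlim)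
      (Eventually.of_forall fun n => ?_)
    simp only [Function.comp_apply, id, real_inner_smul_right]
    exact mul_le_mul_of_nonneg_left (hu (φ n)).2 (inv_nonneg.2 (norm_nonneg _))
  have heW' : e ∈ Wᗮ := (Submodule.mem_orthogonal W e).2 fun k hkW =>
    Submodule.mem_orthogonal_singleton_iff_inner_left.1
      (Submodule.span_le.2 (fun k hk => Submodule.mem_orthogonal_singleton_iff_inner_left.2
        (inner_eq_zero_of_mem_intrinsicInterior_polarCone hp heU hpe hk)) hkW)
  have he0 : e = 0 := by
    simpa using (Submodule.eq_bot_iff _).1 W.inf_orthogonal_eq_bot e ⟨heW, heW'⟩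
  simp [he0] at he1

theorem intrinsicInterior_polarCone_recCone_subset_svRan (hne : U.Nonempty) (hcl : IsClosed U)
    (hconv : Convex ℝ U) :
    intrinsicInterior ℝ (polarCone (recCone U)) ⊆ svRan (normalConeOp U) := by
  intro p hp
  set W := Submodule.span ℝ (polarCone (recCone U))
  have hπU : ∀ u ∈ U, W.starProjection u ∈ U := fun u hu => by
    simpa using orthogonal_span_polarCone_recCone_subset hcl hconv
      (W.orthogonal.neg_mem (W.sub_starProjection_mem_orthogonal u)) u hu
  have hπp : ∀ u, ⟪p, W.starProjection u⟫ = ⟪p, u⟫ := fun u => by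
    rw [← W.inner_starProjection_left_eq_right,
      W.starProjection_eq_self_iff.2 (Submodule.subset_span (intrinsicInterior_subset hp))]
  obtain ⟨u₁, hu₁⟩ := hne
  set A := U ∩ (W : Set X) ∩ {y | ⟪p, u₁⟫ ≤ ⟪p, y⟫}
  have hπA : ∀ u ∈ U, ⟪p, u₁⟫ ≤ ⟪p, u⟫ → W.starProjection u ∈ A := fun u hu h =>
    ⟨⟨hπU u hu, W.starProjection_apply_mem u⟩, h.trans (hπp u).ge⟩
  have hA : IsCompact A := Metric.isCompact_of_isClosed_isBounded
    ((hcl.inter W.closed_of_finiteDimensional).inter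
      (isClosed_le continuous_const (continuous_const.inner continuous_id)))
    (isBounded_inter_span_polarCone_recCone_inter hcl hconv hp _)
  obtain ⟨z, hzA, hzmax⟩ := hA.exists_isMaxOn ⟨_, hπA u₁ hu₁ le_rfl⟩
    (continuous_const.inner continuous_id : Continuous fun y : X => ⟪p, y⟫).continuousOn
  refine mem_iUnion.2 ⟨z, hzA.1.1, fun y hy => ?_⟩
  rw [inner_sub_right, sub_nonpos]
  rcases le_total ⟪p, u₁⟫ ⟪p, y⟫ with h | h
  · simpa [hπp] using hzmax (hπA y hy h)
  · exact h.trans (by simpa [hπp] using hzmax (hπA u₁ hu₁ le_rfl))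

end NormalConeRange

theorem nonneg_of_forall_le_natCast_mul {a b : ℝ} (h : ∀ n : ℕ, a ≤ n * b) : 0 ≤ b := by
  by_contra! hb
  obtain ⟨n, hn⟩ := exists_nat_gt (a / b)
  linarith [h n, (div_lt_iff_of_neg hb).1 hn]

section Qualification

variable {X : Type*} [NormedAddCommGroup X] [InnerProductSpace ℝ X] [FiniteDimensional ℝ X]
  {U V : Set X}

theorem intrinsicInterior_sub_inter_intrinsicInterior_polarCone_add_nonempty (hUne : U.Nonempty)
    (hVne : V.Nonempty) (hVcl : IsClosed V) (hUconv : Convex ℝ U) (hVconv : Convex ℝ V) :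
    (intrinsicInterior ℝ (U - V) ∩
      intrinsicInterior ℝ (polarCone (recCone U) + polarCone (recCone V))).Nonempty := by
  set K := polarCone (recCone U) + polarCone (recCone V)
  have h0K : (0 : X) ∈ K := ⟨0, zero_mem_polarCone _, 0, zero_mem_polarCone _, add_zero 0⟩
  obtain ⟨u, hu⟩ := hUne
  obtain ⟨v, hv⟩ := hVne
  by_contra hdisj
  obtain ⟨φ, hφ0, hφ⟩ := (hUconv.sub hVconv).exists_ne_zero_inner_le_of_disjoint_intrinsicInterior
    ((convex_polarCone _).add (convex_polarCone _)) ⟨u - v, sub_mem_sub hu hv⟩ ⟨0, h0K⟩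
    (disjoint_iff_inter_eq_empty.2 (not_nonempty_iff_eq_empty.1 hdisj))
  -- `K` is a cone, so the separating functional is nonnegative on it; hence `-φ ∈ rec V`
  have hK : ∀ k ∈ K, 0 ≤ ⟪φ, k⟫ := fun k hk => nonneg_of_forall_le_natCast_mul fun n => by
    simpa [real_inner_smul_right] using
      hφ _ (sub_mem_sub hu hv) _ (natCast_smul_mem_polarCone_add_polarCone hk n)
  have hφV : -φ ∈ recCone V := polarCone_polarCone_recCone_subset hVcl hVconv fun k hk => by
    rw [inner_neg_right, real_inner_comm, neg_nonpos]
    exact hK k ⟨0, zero_mem_polarCone _, k, hk, zero_add k⟩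
  -- then `u - v + n • φ ∈ U - V` for all `n`, against `⟪φ, ·⟫ ≤ ⟪φ, 0⟫` on `U - V`
  have hφφ : 0 ≤ -⟪φ, φ⟫ := nonneg_of_forall_le_natCast_mul (a := ⟪φ, u - v⟫) fun n => by
    have := hφ _ (sub_mem_sub hu (add_natCast_smul_mem_of_mem_recCone hφV hv n)) 0 h0K
    rw [show u - (v + (n : ℝ) • -φ) = (u - v) + (n : ℝ) • φ by module, inner_add_right,
      real_inner_smul_right, inner_zero_right] at this
    linarith
  exact hφ0 (real_inner_self_nonpos.1 (neg_nonneg.1 hφφ))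

end Qualification

section NonexpansiveMaps

variable {X : Type*} [NormedAddCommGroup X] [InnerProductSpace ℝ X] {T : X → X}

theorem LipschitzWith.inner_sub_sub_nonneg (hT : LipschitzWith 1 T) (x y : X) :
    0 ≤ ⟪(x - T x) - (y - T y), x - y⟫ := by
  have h : ‖T x - T y‖ ≤ ‖x - y‖ := by simpa [dist_eq_norm] using hT.dist_le_mul x y
  rw [sub_sub_sub_comm, inner_sub_left, real_inner_self_eq_norm_mul_norm]
  nlinarith [real_inner_le_norm (T x - T y) (x - y), norm_nonneg (x - y)]

theorem LipschitzWith.exists_sub_add_smul_eq [CompleteSpace X] (hT : LipschitzWith 1 T) (w : X)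
    {ε : ℝ} (hε : 0 < ε) : ∃ x, (x - T x) + ε • x = w := by
  set Φ : X → X := fun x => (1 + ε)⁻¹ • (T x + w)
  have hΦ : ContractingWith (1 + ε)⁻¹.toNNReal Φ := by
    refine ⟨Real.toNNReal_lt_one.2 (inv_lt_one_of_one_lt₀ (by linarith)),
      LipschitzWith.of_dist_le' fun x y => ?_⟩
    rw [dist_eq_norm, dist_eq_norm, ← smul_sub, add_sub_add_right_eq_sub, norm_smul,
      Real.norm_of_nonneg (by positivity)]
    gcongr
    simpa [dist_eq_norm] using hT.dist_le_mul x y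
  obtain ⟨x, hx, -⟩ := hΦ.exists_fixedPoint 0 (edist_ne_top _ _)
  refine ⟨x, ?_⟩
  have hx' : (1 + ε) • x = T x + w := by
    conv_lhs => rw [← hx.eq]
    rw [smul_smul, mul_inv_cancel₀ (by positivity), one_smul]
  calc (x - T x) + ε • x = (1 + ε) • x - T x := by module
    _ = w := by rw [hx', add_sub_cancel_left]

end NonexpansiveMaps

section DouglasRachford

variable {X : Type*} [NormedAddCommGroup X] [InnerProductSpace ℝ X] {U V : Set X}
  {P PU PV : X → X}

theorem IsMetricProjection.isResolventOf_normalConeOp (hconv : Convex ℝ U)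
    (hP : IsMetricProjection P U) : IsResolventOf P (normalConeOp U) := by
  intro x
  obtain ⟨hPx, hmin⟩ := hP x
  have : Nonempty U := ⟨⟨P x, hPx⟩⟩
  refine ⟨hPx, (norm_eq_iInf_iff_real_inner_le_zero hconv hPx).1 (le_antisymm ?_ ?_)⟩
  · exact le_ciInf fun w => hmin w w.2
  · exact ciInf_le (f := fun w : U => ‖x - w‖) ⟨0, forall_mem_range.2 fun _ => norm_nonneg _⟩
      ⟨P x, hPx⟩

theorem IsMetricProjection.lipschitzWith_reflection (hconv : Convex ℝ U)
    (hP : IsMetricProjection P U) : LipschitzWith 1 fun x => (2 : ℝ) • P x - x := by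
  refine LipschitzWith.mk_one fun x y => ?_
  have hx := (hP.isResolventOf_normalConeOp hconv x).2 (P y) (hP y).1
  have hy := (hP.isResolventOf_normalConeOp hconv y).2 (P x) (hP x).1
  rw [dist_eq_norm, dist_eq_norm, ← sq_le_sq₀ (norm_nonneg _) (norm_nonneg _),
    ← real_inner_self_eq_norm_sq, ← real_inner_self_eq_norm_sq]
  -- `hx + hy` is firm nonexpansiveness: `‖P x - P y‖² ≤ ⟪x - y, P x - P y⟫`
  simp only [inner_sub_left, inner_sub_right, real_inner_smul_right, real_inner_comm] at hx hy ⊢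
  linarith

theorem svRan_normalConeOp_subset_polarCone_recCone :
    svRan (normalConeOp U) ⊆ polarCone (recCone U) := by
  intro u hu e he
  obtain ⟨z, hz, hu⟩ := mem_iUnion.1 hu
  simpa [real_inner_comm] using hu _ (he z hz)

theorem sub_drT_eq (PU PV : X → X) (x : X) :
    x - drT PU PV x = PU x - PV ((2 : ℝ) • PU x - x) := by
  simp only [drT]
  abel

theorem sub_drT_mem (hUconv : Convex ℝ U) (hVconv : Convex ℝ V) (hPU : IsMetricProjection PU U)
    (hPV : IsMetricProjection PV V) (x : X) :
    x - drT PU PV x ∈ (U - V) ∩ (svRan (normalConeOp U) + svRan (normalConeOp V)) := by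
  set y := (2 : ℝ) • PU x - x
  refine ⟨sub_drT_eq PU PV x ▸ sub_mem_sub (hPU x).1 (hPV y).1,
    x - PU x, mem_iUnion.2 ⟨_, hPU.isResolventOf_normalConeOp hUconv x⟩,
    y - PV y, mem_iUnion.2 ⟨_, hPV.isResolventOf_normalConeOp hVconv y⟩, ?_⟩
  rw [sub_drT_eq]
  module

theorem lipschitzWith_drT_s15 (hUconv : Convex ℝ U) (hVconv : Convex ℝ V)
    (hPU : IsMetricProjection PU U) (hPV : IsMetricProjection PV V) :
    LipschitzWith 1 (drT PU PV) := by
  set R : X → X := fun x => (2 : ℝ) • PV ((2 : ℝ) • PU x - x) - ((2 : ℝ) • PU x - x)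
  have hR : LipschitzWith 1 R := by
    have := (hPV.lipschitzWith_reflection hVconv).comp (hPU.lipschitzWith_reflection hUconv)
    rwa [mul_one] at this
  have hT : ∀ x, drT PU PV x = (2 : ℝ)⁻¹ • (x + R x) := fun x => by
    simp only [drT, R]
    module
  refine LipschitzWith.mk_one fun x y => ?_
  rw [hT, hT, dist_eq_norm, dist_eq_norm, ← smul_sub, norm_smul, Real.norm_of_nonneg (by norm_num),
    add_sub_add_comm]
  have := hR.dist_le_mul x y
  rw [dist_eq_norm, dist_eq_norm, NNReal.coe_one, one_mul] at this
  linarith [norm_add_le (x - y) (R x - R y)]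

end DouglasRachford

section ResolventApproximation

variable {X : Type*} [NormedAddCommGroup X] [InnerProductSpace ℝ X]

theorem mem_closure_range_of_forall_add_smul_eq {M : X → X} {w : X} {B : ℝ}
    (h : ∀ ε : ℝ, 0 < ε → ∃ x, M x + ε • x = w ∧ ε * ‖x‖ ^ 2 ≤ B) : w ∈ closure (range M) := by
  have hε : ∀ n : ℕ, (0 : ℝ) < 1 / (n + 1) := fun n => by positivity
  choose x hx hB using fun n : ℕ => h _ (hε n)
  have hbound : Tendsto (fun n : ℕ => √(1 / ((n : ℝ) + 1) * B)) atTop (𝓝 0) := by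
    have := (Real.continuous_sqrt.tendsto (0 * B)).comp
      (tendsto_one_div_add_atTop_nhds_zero_nat.mul_const B)
    rwa [zero_mul, Real.sqrt_zero] at this
  -- `‖ε • x‖ ^ 2 = ε * (ε * ‖x‖ ^ 2) ≤ ε * B`
  have hsmul : Tendsto (fun n : ℕ => (1 / ((n : ℝ) + 1)) • x n) atTop (𝓝 0) := by
    refine squeeze_zero_norm (fun n => ?_) hbound
    refine Real.le_sqrt_of_sq_le ?_
    rw [norm_smul, Real.norm_of_nonneg (hε n).le, mul_pow, sq (1 / ((n : ℝ) + 1)), mul_assoc]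
    exact mul_le_mul_of_nonneg_left (hB n) (hε n).le
  have hM : Tendsto (fun n => M (x n)) atTop (𝓝 w) := by
    refine (sub_zero w ▸ tendsto_const_nhds.sub hsmul).congr fun n => ?_
    rw [← hx n, add_sub_cancel_right]
  exact mem_closure_of_tendsto hM (Eventually.of_forall fun n => mem_range_self _)

end ResolventApproximation

section DouglasRachfordRange

variable {X : Type*} [NormedAddCommGroup X] [InnerProductSpace ℝ X] {U V : Set X}
  {PU PV : X → X}

theorem mul_norm_sq_le_of_sub_drT_add_smul_eq (hUconv : Convex ℝ U) (hVconv : Convex ℝ V)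
    (hPU : IsMetricProjection PU U) (hPV : IsMetricProjection PV V) {u₀ v₀ z₁ z₂ p q x : X}
    {ε : ℝ} (hu₀ : u₀ ∈ U) (hv₀ : v₀ ∈ V) (hp : p ∈ normalConeOp U z₁)
    (hq : q ∈ normalConeOp V z₂) (hx₁ : (x - drT PU PV x) + ε • x = u₀ - v₀)
    (hx₂ : (x - drT PU PV x) + ε • x = p + q) :
    ε * ‖x‖ ^ 2 ≤ ⟪p, z₁⟫ + ⟪q, z₂⟫ + ‖q - v₀‖ ^ 2 / 4 := by
  set a := PU x
  set b := PV ((2 : ℝ) • a - x)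
  have hF : x - drT PU PV x = a - b := sub_drT_eq PU PV x
  obtain rfl : u₀ = a - b + ε • x + v₀ := by rw [← hF, hx₁]; abel
  obtain rfl : p = a - b + ε • x - q := by rw [← hF, hx₂]; abel
  have h₁ := (hPU.isResolventOf_normalConeOp hUconv x).2 _ hu₀
  have h₂ := (hPV.isResolventOf_normalConeOp hVconv ((2 : ℝ) • a - x)).2 _ hv₀
  have h₃ := hp.2 a (hPU x).1
  have h₄ := hq.2 b (hPV _).1
  have hsq := real_inner_self_nonneg (x := (q - v₀) - (2 : ℝ) • (a - b))
  -- the bound minus `ε ‖x‖²` is exactly `-(h₁ + h₂ + h₃ + h₄) + hsq / 4`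
  rw [← real_inner_self_eq_norm_sq, ← real_inner_self_eq_norm_sq]
  simp only [inner_add_left, inner_add_right, inner_sub_left, inner_sub_right,
    real_inner_smul_left, real_inner_smul_right, real_inner_comm] at h₁ h₂ h₃ h₄ hsq ⊢
  linarith

theorem mem_closure_range_sub_drT [CompleteSpace X] (hUconv : Convex ℝ U) (hVconv : Convex ℝ V)
    (hPU : IsMetricProjection PU U) (hPV : IsMetricProjection PV V) {w : X}
    (hw : w ∈ (U - V) ∩ (svRan (normalConeOp U) + svRan (normalConeOp V))) :
    w ∈ closure (range fun x => x - drT PU PV x) := by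
  obtain ⟨⟨u₀, hu₀, v₀, hv₀, huv⟩, p, hp, q, hq, hpq⟩ := hw
  obtain ⟨z₁, hp⟩ := mem_iUnion.1 hp
  obtain ⟨z₂, hq⟩ := mem_iUnion.1 hq
  refine mem_closure_range_of_forall_add_smul_eq (B := ⟪p, z₁⟫ + ⟪q, z₂⟫ + ‖q - v₀‖ ^ 2 / 4)
    fun ε hε => ?_
  obtain ⟨x, hx⟩ := (lipschitzWith_drT_s15 hUconv hVconv hPU hPV).exists_sub_add_smul_eq w hε
  exact ⟨x, hx, mul_norm_sq_le_of_sub_drT_add_smul_eq hUconv hVconv hPU hPV hu₀ hv₀ hp hq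
    (hx.trans huv.symm) (hx.trans hpq.symm)⟩

end DouglasRachfordRange

section MonotoneRange

variable {X : Type*} [NormedAddCommGroup X] [InnerProductSpace ℝ X] {M : X → X} {w : X}

theorem tendsto_norm_atTop_of_notMem_range [ProperSpace X] (hcont : Continuous M) {x : ℕ → X}
    {ε : ℕ → ℝ} (hε : Tendsto ε atTop (𝓝 0)) (hx : ∀ n, M (x n) + ε n • x n = w)
    (hw : w ∉ range M) : Tendsto (‖x ·‖) atTop atTop := by
  refine tendsto_atTop.2 fun r => ?_
  by_contra h
  have hfreq : ∃ᶠ n in atTop, x n ∈ Metric.closedBall 0 r :=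
    (not_eventually.1 h).mono fun n hn => mem_closedBall_zero_iff.2 (not_le.1 hn).le
  obtain ⟨a, -, φ, hφ, hlim⟩ :=
    tendsto_subseq_of_frequently_bounded Metric.isBounded_closedBall hfreq
  have hMw : Tendsto (fun n => M (x (φ n))) atTop (𝓝 w) := by
    have := tendsto_const_nhds (x := w) |>.sub ((hε.comp hφ.tendsto_atTop).smul hlim)
    rw [zero_smul, sub_zero] at this
    refine this.congr fun n => ?_
    simp only [Function.comp_apply]
    rw [← hx (φ n), add_sub_cancel_right]
  exact hw ⟨a, tendsto_nhds_unique ((hcont.tendsto a).comp hlim) hMw⟩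

theorem inner_sub_nonneg_of_tendsto_inv_norm_smul (hmono : ∀ x y, 0 ≤ ⟪M x - M y, x - y⟫)
    {y : ℕ → X} {δ : ℕ → ℝ} {d : X} (hδ : Tendsto δ atTop (𝓝 0)) (hδ0 : ∀ n, 0 ≤ δ n)
    (hy : ∀ n, M (y n) + δ n • y n = w) (hnorm : Tendsto (‖y ·‖) atTop atTop)
    (hd : Tendsto (fun n => ‖y n‖⁻¹ • y n) atTop (𝓝 d)) (z : X) : 0 ≤ ⟪w - M z, d⟫ := by
  have hbound : ∀ n, -(δ n * ‖z‖) ≤ ⟪w - M z, ‖y n‖⁻¹ • y n - ‖y n‖⁻¹ • z⟫ := fun n => by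
    rw [← smul_sub, real_inner_smul_right, ← hy n, add_sub_right_comm, inner_add_left,
      real_inner_smul_left]
    have hyz : -(‖y n‖ * ‖z‖) ≤ ⟪y n, y n - z⟫ := by
      rw [inner_sub_right, real_inner_self_eq_norm_sq]
      nlinarith [real_inner_le_norm (y n) z, norm_nonneg (y n)]
    have hinv : ‖y n‖⁻¹ * ‖y n‖ ≤ 1 := by
      rcases eq_or_ne ‖y n‖ 0 with h | h
      · simp [h]
      · rw [inv_mul_cancel₀ h]
    calc -(δ n * ‖z‖) ≤ -(δ n * ‖z‖) * (‖y n‖⁻¹ * ‖y n‖) := by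
          nlinarith [mul_nonneg (hδ0 n) (norm_nonneg z), inv_nonneg.2 (norm_nonneg (y n)),
            norm_nonneg (y n)]
      _ = ‖y n‖⁻¹ * (δ n * -(‖y n‖ * ‖z‖)) := by ring
      _ ≤ ‖y n‖⁻¹ * (⟪M (y n) - M z, y n - z⟫ + δ n * ⟪y n, y n - z⟫) := by
          gcongr
          linarith [mul_le_mul_of_nonneg_left hyz (hδ0 n), hmono (y n) z]
  have hlim : Tendsto (fun n => ‖y n‖⁻¹ • y n - ‖y n‖⁻¹ • z) atTop (𝓝 d) := by
    simpa using hd.sub (hnorm.inv_tendsto_atTop.smul_const z)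
  exact le_of_tendsto_of_tendsto (by simpa using (hδ.mul_const ‖z‖).neg)
    (((continuous_const.inner continuous_id).tendsto d).comp hlim) (Eventually.of_forall hbound)

theorem mem_range_of_mem_intrinsicInterior [FiniteDimensional ℝ X] (hcont : Continuous M)
    (hmono : ∀ x y, 0 ≤ ⟪M x - M y, x - y⟫) (hres : ∀ ε : ℝ, 0 < ε → ∃ x, M x + ε • x = w)
    {D : Set X} (hMD : range M ⊆ D) (hDM : D ⊆ closure (range M)) (hw : w ∈ intrinsicInterior ℝ D) :
    w ∈ range M := by
  by_contra hwM
  have hε : ∀ n : ℕ, (0 : ℝ) < 1 / (n + 1) := fun n => by positivity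
  choose x hx using fun n : ℕ => hres (1 / ((n : ℝ) + 1)) (hε n)
  have hx0 : ∀ n, x n ≠ 0 := fun n h0 => hwM ⟨0, by simpa [h0] using hx n⟩
  have hnorm := tendsto_norm_atTop_of_notMem_range hcont tendsto_one_div_add_atTop_nhds_zero_nat
    hx hwM
  obtain ⟨d, hd1, φ, hφ, hd⟩ := exists_subseq_tendsto_inv_norm_smul hx0
  -- `d` is an outward direction of `D` at `w`, hence orthogonal to all `w - z` with `z ∈ D`
  have hMd : ∀ z, 0 ≤ ⟪w - M z, d⟫ := inner_sub_nonneg_of_tendsto_inv_norm_smul hmono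
    (tendsto_one_div_add_atTop_nhds_zero_nat.comp hφ.tendsto_atTop) (fun n => (hε _).le)
    (fun n => hx (φ n)) (hnorm.comp hφ.tendsto_atTop) hd
  have hDd : ∀ z ∈ D, 0 ≤ ⟪w - z, d⟫ := fun z hz => closure_minimal (t := {c | 0 ≤ ⟪w - c, d⟫})
    (range_subset_iff.2 hMd)
    (isClosed_le continuous_const ((continuous_const.sub continuous_id).inner continuous_const))
    (hDM hz)
  -- but each `x n` is a multiple of such a `w - z`
  have hxd : ∀ n, ⟪x n, d⟫ = 0 := fun n => by
    have h := inner_sub_eq_zero_of_mem_intrinsicInterior hw hDd (hMD (mem_range_self (x n)))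
    rw [← hx n, add_sub_cancel_left, real_inner_smul_left] at h
    exact (mul_eq_zero.1 h).resolve_left (hε n).ne'
  have hdd : ⟪d, d⟫ = 0 := by
    refine tendsto_nhds_unique (((continuous_id.inner continuous_const).tendsto d).comp hd) ?_
    simp only [Function.comp_def, id, real_inner_smul_left, hxd, mul_zero, tendsto_const_nhds]
  simp [hd1] at hdd

end MonotoneRange

/-- For nonempty closed convex `U, V` with metric projections `P_U, P_V`, and
`T = Id - P_U + P_V ∘ (2 P_U - Id)` the Douglas–Rachford operator of `(N_U, N_V)`:
`ran (Id - T) ≃ (U - V) ∩ ((rec U)^⊖ + (rec V)^⊖)`. -/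
theorem ran_id_sub_drT_normalCones_nearEq {X : Type*} [NormedAddCommGroup X]
    [InnerProductSpace ℝ X] [FiniteDimensional ℝ X] (U V : Set X)
    (hUne : U.Nonempty) (hVne : V.Nonempty)
    (hUcl : IsClosed U) (hVcl : IsClosed V)
    (hUconv : Convex ℝ U) (hVconv : Convex ℝ V)
    (PU PV : X → X)
    (hPU : IsMetricProjection PU U) (hPV : IsMetricProjection PV V) :
    NearEq (Set.range fun x => x - drT PU PV x)
      ((U - V) ∩ (polarCone (recCone U) + polarCone (recCone V))) := by
  set C := Set.range fun x => x - drT PU PV x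
  set K := polarCone (recCone U) + polarCone (recCone V)
  have hKconv : Convex ℝ K := (convex_polarCone _).add (convex_polarCone _)
  have hDconv : Convex ℝ ((U - V) ∩ K) := (hUconv.sub hVconv).inter hKconv
  have hsvRan : svRan (normalConeOp U) + svRan (normalConeOp V) ⊆ K :=
    add_subset_add svRan_normalConeOp_subset_polarCone_recCone
      svRan_normalConeOp_subset_polarCone_recCone
  have hCD : C ⊆ (U - V) ∩ K := range_subset_iff.2 fun x =>
    inter_subset_inter_right _ hsvRan (sub_drT_mem hUconv hVconv hPU hPV x)
  have hriD : intrinsicInterior ℝ ((U - V) ∩ K) ⊆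
      (U - V) ∩ (svRan (normalConeOp U) + svRan (normalConeOp V)) := by
    refine ((hUconv.sub hVconv).intrinsicInterior_inter_subset hKconv
      (intrinsicInterior_sub_inter_intrinsicInterior_polarCone_add_nonempty hUne hVne hVcl hUconv
        hVconv)).trans (inter_subset_inter intrinsicInterior_subset ?_)
    refine ((convex_polarCone _).intrinsicInterior_add_subset (convex_polarCone _)
      ⟨0, zero_mem_polarCone _⟩ ⟨0, zero_mem_polarCone _⟩).trans (add_subset_add ?_ ?_)
    · exact intrinsicInterior_polarCone_recCone_subset_svRan hUne hUcl hUconv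
    · exact intrinsicInterior_polarCone_recCone_subset_svRan hVne hVcl hVconv
  have hcl : closure C = closure ((U - V) ∩ K) := by
    refine (closure_mono hCD).antisymm ?_
    rw [← hDconv.closure_intrinsicInterior]
    exact closure_minimal (fun w hw => mem_closure_range_sub_drT hUconv hVconv hPU hPV (hriD hw))
      isClosed_closure
  have hT := lipschitzWith_drT_s15 hUconv hVconv hPU hPV
  have hriC : intrinsicInterior ℝ ((U - V) ∩ K) ⊆ C := fun w hw =>
    mem_range_of_mem_intrinsicInterior (continuous_id.sub hT.continuous) hT.inner_sub_sub_nonneg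
      (fun _ hε => hT.exists_sub_add_smul_eq w hε) hCD (hcl ▸ subset_closure) hw
  exact ⟨hcl, intrinsicInterior_eq_of_subset_of_closure_eq hCD hcl hriC⟩
end

section
/- Let T₁ : X → X and T₂ : X → X be firmly nonexpansive mappings such that for each i ∈ {1,2} and all x, y ∈ X the set {⟨Tᵢx − Tᵢz, (y − Tᵢy) − (z − Tᵢz)⟩ : z ∈ X} is bounded below, and set T := T₂ ∘ (2T₁ − Id) + Id − T₁. Then ran T ≃ (ran T₁ − ran(Id − T₂)) ∩ (ran(Id − T₁) + ran T₂) and ran(Id − T) ≃ (ran T₁ − ran T₂) ∩ (ran(Id − T₁) + ran(Id − T₂)). -/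
open Set Pointwise

/-- A map is firmly nonexpansive if
`‖Tx - Ty‖² + ‖(x - Tx) - (y - Ty)‖² ≤ ‖x - y‖²` for all `x, y`. -/
def FirmlyNonexpansive {X : Type*} [NormedAddCommGroup X] (T : X → X) : Prop :=
  ∀ x y : X, ‖T x - T y‖ ^ 2 + ‖(x - T x) - (y - T y)‖ ^ 2 ≤ ‖x - y‖ ^ 2

/-- The boundedness condition on a firmly nonexpansive map `T`: for all `x, y` the set
`{⟪Tx - Tz, (y - Ty) - (z - Tz)⟫ : z ∈ X}` is bounded below. -/
def BddBelowInnerCondition {X : Type*} [NormedAddCommGroup X] [InnerProductSpace ℝ X]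
    (T : X → X) : Prop :=
  ∀ x y : X,
    BddBelow {r : ℝ | ∃ z : X, r = (inner ℝ (T x - T z) ((y - T y) - (z - T z)) : ℝ)}

/-! Douglas–Rachford operators `T` built from firmly nonexpansive maps are again firmly
nonexpansive, and so is `Id - T`. In finite dimension the range of a firmly nonexpansive `F` is
nearly convex, `ri (cl (ran F)) ⊆ ran F`: for `z` in the relative interior follow the resolvent
path `z - F c = t • (c - F c)` as `t → 0`. Either `c - F c` stays bounded along a subsequence, and
maximal monotonicity of `F⁻¹ - Id` puts `z` in `ran F`, or the directions of `c - F c` accumulate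
at a unit vector of the affine span supporting `cl (ran F)` at `z`, which is impossible.

Near equality with the Minkowski expression `D` thus reduces to `ran T ⊆ D ⊆ cl (ran T)`. The
first inclusion is algebra. For the second, a Brezis–Haraux argument shows `w ∈ cl (ran F)` as
soon as `x ↦ ⟪w - F x, (x - F x) - y⟫` is bounded above; for `w ∈ D` a Douglas–Rachford identity
splits this inner product into the two quantities bounded below by the hypotheses. The statement
about `Id - T` is the one about `T` for the pair `(T₁, Id - T₂)`. -/

open Filter Topology RealInnerProductSpace

section Normed

variable {X : Type*} [NormedAddCommGroup X] [NormedSpace ℝ X]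

theorem intrinsicInterior_subset_intrinsicInterior {s t : Set X}
    (h : affineSpan ℝ s = affineSpan ℝ t) (hst : intrinsicInterior ℝ s ⊆ t) :
    intrinsicInterior ℝ s ⊆ intrinsicInterior ℝ t := by
  unfold intrinsicInterior at hst ⊢
  rw [h] at hst ⊢
  exact image_mono (interior_maximal (fun a ha => hst ⟨a, ha, rfl⟩) isOpen_interior)

theorem nearEq_of_subset_of_subset_closure [FiniteDimensional ℝ X] {S D : Set X}
    (hSD : S ⊆ D) (hDS : D ⊆ closure S) (hS : intrinsicInterior ℝ (closure S) ⊆ S) :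
    NearEq S D := by
  have hspan_closure : affineSpan ℝ (closure S) = affineSpan ℝ S := by
    rw [← intrinsicClosure_eq_closure ℝ S, affineSpan_intrinsicClosure]
  have hspan : affineSpan ℝ S = affineSpan ℝ D :=
    le_antisymm (affineSpan_mono ℝ hSD) (hspan_closure ▸ affineSpan_mono ℝ hDS)
  have hDS' : intrinsicInterior ℝ D ⊆ S :=
    (intrinsicInterior_subset_intrinsicInterior (hspan.symm.trans hspan_closure.symm)
      (intrinsicInterior_subset.trans hDS)).trans hS
  refine ⟨(closure_mono hSD).antisymm (closure_minimal hDS isClosed_closure), ?_⟩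
  exact (intrinsicInterior_subset_intrinsicInterior hspan
    (intrinsicInterior_subset.trans hSD)).antisymm
    (intrinsicInterior_subset_intrinsicInterior hspan.symm hDS')

theorem exists_subseq_tendsto_smul_inv_one_add_norm [ProperSpace X] (m : ℕ → X) :
    ∃ (e : X) (τ : ℝ) (φ : ℕ → ℕ), StrictMono φ ∧ 0 ≤ τ ∧ ‖e‖ = 1 - τ ∧
      Tendsto (fun k => (1 + ‖m (φ k)‖)⁻¹) atTop (𝓝 τ) ∧
      Tendsto (fun k => (1 + ‖m (φ k)‖)⁻¹ • m (φ k)) atTop (𝓝 e) := by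
  set t : ℕ → ℝ := fun n => (1 + ‖m n‖)⁻¹
  have hnorm : ∀ n, ‖t n • m n‖ = 1 - t n := fun n => by
    rw [norm_smul, Real.norm_of_nonneg (by positivity)]
    simp only [t]
    field_simp
    ring
  have hmem : ∀ n, (t n, t n • m n) ∈ Icc (0 : ℝ) 1 ×ˢ Metric.closedBall (0 : X) 1 := fun n =>
    ⟨⟨by positivity, inv_le_one_of_one_le₀ (by linarith [norm_nonneg (m n)])⟩,
      by rw [Metric.mem_closedBall, dist_zero_right, hnorm]; linarith [show 0 < t n by positivity]⟩
  obtain ⟨⟨τ, e⟩, ⟨hτ, -⟩, φ, hφ, hlim⟩ :=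
    (isCompact_Icc.prod (isCompact_closedBall (0 : X) 1)).tendsto_subseq hmem
  have ht : Tendsto (fun k => t (φ k)) atTop (𝓝 τ) := hlim.fst_nhds
  have he : Tendsto (fun k => t (φ k) • m (φ k)) atTop (𝓝 e) := hlim.snd_nhds
  refine ⟨e, τ, φ, hφ, hτ.1, tendsto_nhds_unique he.norm ?_, ht, he⟩
  simpa only [hnorm] using tendsto_const_nhds.sub ht

end Normed

section InnerProduct

variable {X : Type*} [NormedAddCommGroup X] [InnerProductSpace ℝ X]

theorem eq_zero_of_inner_nonpos_of_mem_intrinsicInterior {S : Set X} {z v : X}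
    (hz : z ∈ intrinsicInterior ℝ S) (hv : v ∈ (affineSpan ℝ S).direction)
    (h : ∀ m ∈ S, ⟪m - z, v⟫ ≤ 0) : v = 0 := by
  obtain ⟨y, hy, rfl⟩ := mem_intrinsicInterior.1 hz
  obtain ⟨ε, hε, hball⟩ := Metric.mem_nhds_iff.1 (mem_interior_iff_mem_nhds.1 hy)
  set t := ε / (2 * (‖v‖ + 1))
  have ht : 0 < t := by positivity
  have hspan : t • v + (y : X) ∈ affineSpan ℝ S :=
    AffineSubspace.vadd_mem_of_mem_direction (Submodule.smul_mem _ t hv) y.2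
  have hS : t • v + (y : X) ∈ S := by
    refine hball (show (⟨_, hspan⟩ : affineSpan ℝ S) ∈ Metric.ball y ε from ?_)
    rw [Metric.mem_ball, Subtype.dist_eq, dist_eq_norm, add_sub_cancel_right, norm_smul,
      Real.norm_of_nonneg ht.le, div_mul_eq_mul_div, div_lt_iff₀ (by positivity)]
    nlinarith [norm_nonneg v]
  have hv₀ := h _ hS
  rw [add_sub_cancel_right, real_inner_smul_left, real_inner_self_eq_norm_sq] at hv₀
  have : ‖v‖ ^ 2 ≤ 0 := by nlinarith
  exact norm_eq_zero.1 (pow_eq_zero_iff two_ne_zero |>.1 (le_antisymm this (sq_nonneg _)))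

theorem apply_add_eq_of_inner_nonneg {F : X → X} {z v : X}
    (h : ∀ x, 0 ≤ ⟪z - F x, v - (x - F x)⟫) : F (z + v) = z := by
  have h₀ := h (z + v)
  rw [show v - (z + v - F (z + v)) = -(z - F (z + v)) by abel, inner_neg_right,
    real_inner_self_eq_norm_sq, neg_nonneg] at h₀
  have : ‖z - F (z + v)‖ = 0 := by nlinarith [norm_nonneg (z - F (z + v))]
  exact (sub_eq_zero.1 (norm_eq_zero.1 this)).symm

end InnerProduct

namespace FirmlyNonexpansive

section Normed

variable {X : Type*} [NormedAddCommGroup X] {F : X → X}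

theorem nonexpansive (hF : FirmlyNonexpansive F) (x y : X) : ‖F x - F y‖ ≤ ‖x - y‖ := by
  have h := hF x y
  nlinarith [norm_nonneg (F x - F y), norm_nonneg (x - y), sq_nonneg ‖(x - F x) - (y - F y)‖]

theorem id_sub (hF : FirmlyNonexpansive F) : FirmlyNonexpansive fun x => x - F x := by
  intro x y
  rw [sub_sub_cancel, sub_sub_cancel]
  linarith [hF x y]

end Normed

variable {X : Type*} [NormedAddCommGroup X] [InnerProductSpace ℝ X] {F : X → X}

theorem _root_.firmlyNonexpansive_iff_inner_nonneg :
    FirmlyNonexpansive F ↔ ∀ x y, 0 ≤ ⟪F x - F y, (x - F x) - (y - F y)⟫ := by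
  refine forall₂_congr fun x y => ?_
  rw [show (x - F x) - (y - F y) = (x - y) - (F x - F y) by abel,
    norm_sub_sq_real (x - y) (F x - F y), inner_sub_right (F x - F y) (x - y),
    real_inner_self_eq_norm_sq, real_inner_comm]
  constructor <;> intro h <;> linarith

theorem inner_nonneg (hF : FirmlyNonexpansive F) (x y : X) :
    0 ≤ ⟪F x - F y, (x - F x) - (y - F y)⟫ :=
  firmlyNonexpansive_iff_inner_nonneg.1 hF x y

theorem exists_sub_apply_eq_smul [CompleteSpace X] (hF : FirmlyNonexpansive F) {t : ℝ}
    (ht₀ : 0 < t) (ht₁ : t ≤ 1) (w y : X) : ∃ c, w - F c = t • ((c - F c) - y) := by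
  let G : X → X := fun c => (1 - t) • (c - F c) + (w + t • y)
  have hG : ContractingWith (Real.toNNReal (1 - t)) G := by
    refine ⟨Real.toNNReal_lt_one.2 (by linarith), LipschitzWith.of_dist_le' fun a b => ?_⟩
    rw [dist_eq_norm, dist_eq_norm,
      show G a - G b = (1 - t) • ((a - F a) - (b - F b)) by simp only [G]; module,
      norm_smul, Real.norm_of_nonneg (by linarith)]
    exact mul_le_mul_of_nonneg_left (hF.id_sub.nonexpansive a b) (by linarith)
  have : Nonempty X := ⟨w⟩
  refine ⟨ContractingWith.fixedPoint G hG, ?_⟩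
  have hc := ContractingWith.fixedPoint_isFixedPt (f := G) hG
  simp only [Function.IsFixedPt, G] at hc
  linear_combination (norm := module) hc

theorem mem_closure_range_of_inner_le [CompleteSpace X] (hF : FirmlyNonexpansive F)
    {w y : X} {K : ℝ} (hK : ∀ x, ⟪w - F x, (x - F x) - y⟫ ≤ K) : w ∈ closure (range F) := by
  rw [Metric.mem_closure_iff]
  intro ε hε
  set t := min 1 (ε ^ 2 / (|K| + 1))
  have ht : 0 < t := by positivity
  obtain ⟨c, hc⟩ := hF.exists_sub_apply_eq_smul ht (min_le_left _ _) w y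
  refine ⟨F c, mem_range_self c, ?_⟩
  set d := (c - F c) - y
  have hd : t * ‖d‖ ^ 2 ≤ K := by
    have h := hK c
    rwa [hc, real_inner_smul_left, real_inner_self_eq_norm_sq] at h
  have hdist : dist w (F c) ^ 2 < ε ^ 2 := by
    rw [dist_eq_norm, hc, norm_smul, Real.norm_of_nonneg ht.le]
    calc (t * ‖d‖) ^ 2 = t * (t * ‖d‖ ^ 2) := by ring
      _ ≤ ε ^ 2 / (|K| + 1) * |K| :=
        mul_le_mul (min_le_right _ _) (hd.trans (le_abs_self K)) (by positivity) (by positivity)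
      _ < ε ^ 2 := by
        rw [div_mul_eq_mul_div, div_lt_iff₀ (by positivity)]
        nlinarith [abs_nonneg K]
  exact lt_of_pow_lt_pow_left₀ 2 hε.le hdist

theorem norm_apply_sub_apply_le (hF : FirmlyNonexpansive F) {z c : X} {t : ℝ} (ht : 0 ≤ t)
    (hc : z - F c = t • (c - F c)) (p : X) : ‖F c - F p‖ ≤ ‖z - F p‖ + t * ‖p - F p‖ := by
  set u := F c - F p
  have hmono : 0 ≤ ⟪u, (z - F c) - t • (p - F p)⟫ := by
    rw [hc, ← smul_sub, real_inner_smul_right]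
    exact mul_nonneg ht (hF.inner_nonneg c p)
  have h : ‖u‖ ^ 2 ≤ ‖u‖ * (‖z - F p‖ + t * ‖p - F p‖) := calc
    ‖u‖ ^ 2 ≤ ⟪u, u⟫ + ⟪u, (z - F c) - t • (p - F p)⟫ := by
      rw [real_inner_self_eq_norm_sq]; linarith
    _ = ⟪u, (z - F p) - t • (p - F p)⟫ := by
      rw [← inner_add_right]; congr 1; simp only [u]; abel
    _ ≤ ‖u‖ * ‖(z - F p) - t • (p - F p)‖ := real_inner_le_norm _ _
    _ ≤ ‖u‖ * (‖z - F p‖ + t * ‖p - F p‖) := by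
      gcongr
      refine (norm_sub_le _ _).trans_eq ?_
      rw [norm_smul, Real.norm_of_nonneg ht]
  nlinarith [norm_nonneg u, norm_nonneg (z - F p), mul_nonneg ht (norm_nonneg (p - F p))]

theorem tendsto_apply_of_sub_apply_eq_smul (hF : FirmlyNonexpansive F) {z : X}
    (hz : z ∈ closure (range F)) {c : ℕ → X} {t : ℕ → ℝ} (ht : ∀ n, 0 ≤ t n)
    (ht₀ : Tendsto t atTop (𝓝 0)) (hc : ∀ n, z - F (c n) = t n • (c n - F (c n))) :
    Tendsto (fun n => F (c n)) atTop (𝓝 z) := by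
  rw [Metric.tendsto_atTop]
  intro ε hε
  obtain ⟨_, ⟨p, rfl⟩, hp⟩ := Metric.mem_closure_iff.1 hz (ε / 3) (by positivity)
  have hlim : Tendsto (fun n => t n * ‖p - F p‖) atTop (𝓝 0) := by
    simpa only [zero_mul] using ht₀.mul_const ‖p - F p‖
  obtain ⟨N, hN⟩ := Metric.tendsto_atTop.1 hlim (ε / 3) (by positivity)
  refine ⟨N, fun n hn => ?_⟩
  have h₁ := hF.norm_apply_sub_apply_le (ht n) (hc n) p
  have h₂ := hN n hn
  rw [Real.dist_eq, sub_zero] at h₂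
  rw [dist_eq_norm] at hp
  calc dist (F (c n)) z ≤ ‖F (c n) - F p‖ + ‖F p - z‖ := by
        rw [dist_eq_norm]; exact norm_sub_le_norm_sub_add_norm_sub _ _ _
    _ < ε := by rw [norm_sub_rev (F p)]; linarith [le_abs_self (t n * ‖p - F p‖)]

theorem inner_nonneg_of_tendsto (hF : FirmlyNonexpansive F) {c : ℕ → X} {t : ℕ → ℝ}
    {z e : X} {τ : ℝ} (ht : ∀ k, 0 ≤ t k) (hz : Tendsto (fun k => F (c k)) atTop (𝓝 z))
    (hτ : Tendsto t atTop (𝓝 τ)) (he : Tendsto (fun k => t k • (c k - F (c k))) atTop (𝓝 e))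
    (p : X) : 0 ≤ ⟪z - F p, e - τ • (p - F p)⟫ := by
  refine ge_of_tendsto' ((hz.sub_const (F p)).inner (he.sub (hτ.smul_const (p - F p))))
    fun k => ?_
  rw [← smul_sub, real_inner_smul_right]
  exact mul_nonneg (ht k) (hF.inner_nonneg (c k) p)

theorem intrinsicInterior_closure_range_subset [FiniteDimensional ℝ X]
    (hF : FirmlyNonexpansive F) : intrinsicInterior ℝ (closure (range F)) ⊆ range F := by
  intro z hz
  have hzC : z ∈ closure (range F) := intrinsicInterior_subset hz
  choose c hc using fun n : ℕ => hF.exists_sub_apply_eq_smul (t := 1 / (n + 1))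
    (by positivity) (div_le_one_of_le₀ (by simp) (by positivity)) z 0
  simp only [sub_zero] at hc
  have hFc := hF.tendsto_apply_of_sub_apply_eq_smul hzC (fun n => by positivity)
    tendsto_one_div_add_atTop_nhds_zero_nat hc
  obtain ⟨e, τ, φ, hφ, hτ₀, he₁, hτ, he⟩ :=
    exists_subseq_tendsto_smul_inv_one_add_norm fun n => c n - F (c n)
  have hineq := hF.inner_nonneg_of_tendsto (fun k => by positivity)
    (hFc.comp hφ.tendsto_atTop) hτ he
  rcases hτ₀.eq_or_lt with rfl | hτ
  -- `τ = 0`: `‖c - F c‖ → ∞` along `φ`, and `e` is a unit vector supporting `cl (range F)` at `z`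
  · have hdir : e ∈ (affineSpan ℝ (closure (range F))).direction := by
      refine (Submodule.closed_of_finiteDimensional _).mem_of_tendsto he
        (Eventually.of_forall fun k => Submodule.smul_mem _ _ ?_)
      have hsub := AffineSubspace.vsub_mem_direction (subset_affineSpan ℝ _ hzC)
        (subset_affineSpan ℝ _ (subset_closure (mem_range_self (c (φ k)))))
      rw [vsub_eq_sub, hc] at hsub
      exact (Submodule.smul_mem_iff _ (by positivity)).1 hsub
    have hsupp : ∀ m ∈ closure (range F), ⟪m - z, e⟫ ≤ 0 := by
      refine fun m hm => closure_minimal (t := {m | ⟪m - z, e⟫ ≤ 0}) ?_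
        (isClosed_le (by fun_prop) continuous_const) hm
      rintro _ ⟨p, rfl⟩
      show ⟪F p - z, e⟫ ≤ 0
      rw [← neg_sub z, inner_neg_left, neg_nonpos]
      simpa only [zero_smul, sub_zero] using hineq p
    have := eq_zero_of_inner_nonpos_of_mem_intrinsicInterior hz hdir hsupp
    norm_num [this] at he₁
  -- `τ > 0`: `c - F c → τ⁻¹ • e` along `φ`
  · refine ⟨z + τ⁻¹ • e, apply_add_eq_of_inner_nonneg fun p => ?_⟩
    rw [show τ⁻¹ • e - (p - F p) = τ⁻¹ • (e - τ • (p - F p)) by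
      rw [smul_sub, smul_smul, inv_mul_cancel₀ hτ.ne', one_smul], real_inner_smul_right]
    exact mul_nonneg (inv_nonneg.2 hτ.le) (hineq p)

end FirmlyNonexpansive

section DouglasRachford

variable {X : Type*} [NormedAddCommGroup X] [InnerProductSpace ℝ X]

theorem inner_add_sub_eq_of_add_eq_sub {a₁ b₁ a₂ b₂ : X} (h : b₁ + a₂ = a₁ - b₂) :
    ⟪b₁ + a₂, a₁ - a₂⟫ = ⟪a₁, b₁⟫ + ⟪a₂, b₂⟫ := by
  rw [inner_sub_right]
  nth_rewrite 2 [h]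
  simp only [inner_add_left, inner_sub_left]
  linarith [real_inner_comm a₁ b₁, real_inner_comm a₂ a₁, real_inner_comm a₂ b₂]

theorem BddBelowInnerCondition.id_sub {T : X → X} (hb : BddBelowInnerCondition T) :
    BddBelowInnerCondition fun x => x - T x := by
  intro x y
  refine (hb y x).mono ?_
  rintro _ ⟨z, rfl⟩
  exact ⟨z, by rw [sub_sub_cancel, sub_sub_cancel, real_inner_comm]⟩

variable {T₁ T₂ T : X → X}

theorem FirmlyNonexpansive.douglasRachford (hT₁ : FirmlyNonexpansive T₁)
    (hT₂ : FirmlyNonexpansive T₂) (hT : ∀ x, T x = T₂ ((2 : ℝ) • T₁ x - x) + x - T₁ x) :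
    FirmlyNonexpansive T := by
  refine firmlyNonexpansive_iff_inner_nonneg.2 fun x y => ?_
  set a := (2 : ℝ) • T₁ x - x with ha
  set b := (2 : ℝ) • T₁ y - y with hb
  have h := inner_add_sub_eq_of_add_eq_sub (a₁ := T₁ x - T₁ y) (b₁ := (x - T₁ x) - (y - T₁ y))
    (a₂ := T₂ a - T₂ b) (b₂ := (a - T₂ a) - (b - T₂ b)) (by rw [ha, hb]; module)
  rw [show T x - T y = (x - T₁ x) - (y - T₁ y) + (T₂ a - T₂ b) by rw [hT, hT]; module,
    show (x - T x) - (y - T y) = (T₁ x - T₁ y) - (T₂ a - T₂ b) by rw [hT, hT]; module, h]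
  exact add_nonneg (hT₁.inner_nonneg x y) (hT₂.inner_nonneg a b)

theorem subset_closure_range_douglasRachford [CompleteSpace X] (hT₁ : FirmlyNonexpansive T₁)
    (hT₂ : FirmlyNonexpansive T₂) (hb₁ : BddBelowInnerCondition T₁)
    (hb₂ : BddBelowInnerCondition T₂) (hT : ∀ x, T x = T₂ ((2 : ℝ) • T₁ x - x) + x - T₁ x) :
    (range T₁ - range (fun x => x - T₂ x)) ∩ (range (fun x => x - T₁ x) + range T₂) ⊆
      closure (range T) := by
  rintro w ⟨⟨_, ⟨p, rfl⟩, _, ⟨q, rfl⟩, hpq⟩, ⟨_, ⟨r, rfl⟩, _, ⟨s, rfl⟩, hrs⟩⟩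
  obtain ⟨L₁, hL₁⟩ := hb₁ p r
  obtain ⟨L₂, hL₂⟩ := hb₂ s q
  refine (hT₁.douglasRachford hT₂ hT).mem_closure_range_of_inner_le (y := T₁ p - T₂ s)
    (K := -(L₁ + L₂)) fun x => ?_
  set a := (2 : ℝ) • T₁ x - x with ha
  have hw₁ : w - T x = ((r - T₁ r) - (x - T₁ x)) + (T₂ s - T₂ a) := by
    rw [← hrs, hT]; module
  have hw₂ : w - T x = (T₁ p - T₁ x) - ((q - T₂ q) - (a - T₂ a)) := by
    rw [← hpq, hT, ha]; module
  rw [show (x - T x) - (T₁ p - T₂ s) = -((T₁ p - T₁ x) - (T₂ s - T₂ a)) by rw [hT]; module,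
    inner_neg_right, hw₁, inner_add_sub_eq_of_add_eq_sub (hw₁.symm.trans hw₂)]
  linarith [hL₁ ⟨x, rfl⟩, hL₂ ⟨a, rfl⟩]

theorem nearEq_range_douglasRachford [FiniteDimensional ℝ X] (hT₁ : FirmlyNonexpansive T₁)
    (hT₂ : FirmlyNonexpansive T₂) (hb₁ : BddBelowInnerCondition T₁)
    (hb₂ : BddBelowInnerCondition T₂) (hT : ∀ x, T x = T₂ ((2 : ℝ) • T₁ x - x) + x - T₁ x) :
    NearEq (range T)
      ((range T₁ - range (fun x => x - T₂ x)) ∩ (range (fun x => x - T₁ x) + range T₂)) := by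
  refine nearEq_of_subset_of_subset_closure ?_
    (subset_closure_range_douglasRachford hT₁ hT₂ hb₁ hb₂ hT)
    (hT₁.douglasRachford hT₂ hT).intrinsicInterior_closure_range_subset
  rintro _ ⟨x, rfl⟩
  exact ⟨⟨T₁ x, mem_range_self x, _, mem_range_self ((2 : ℝ) • T₁ x - x), by rw [hT]; module⟩,
    ⟨x - T₁ x, mem_range_self x, _, mem_range_self ((2 : ℝ) • T₁ x - x), by rw [hT]; module⟩⟩

end DouglasRachford

/-- For firmly nonexpansive `T₁, T₂` satisfying the boundedness condition, with
`T = T₂ ∘ (2T₁ - Id) + Id - T₁`: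
`ran T ≃ (ran T₁ - ran (Id - T₂)) ∩ (ran (Id - T₁) + ran T₂)` and
`ran (Id - T) ≃ (ran T₁ - ran T₂) ∩ (ran (Id - T₁) + ran (Id - T₂))`. -/
theorem ran_comp_firmlyNonexpansive_nearEq {X : Type*} [NormedAddCommGroup X]
    [InnerProductSpace ℝ X] [FiniteDimensional ℝ X] (T₁ T₂ : X → X)
    (hT₁ : FirmlyNonexpansive T₁) (hT₂ : FirmlyNonexpansive T₂)
    (hb₁ : BddBelowInnerCondition T₁) (hb₂ : BddBelowInnerCondition T₂)
    (T : X → X) (hT : ∀ x : X, T x = T₂ ((2 : ℝ) • T₁ x - x) + x - T₁ x) :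
    NearEq (Set.range T)
        ((Set.range T₁ - Set.range (fun x => x - T₂ x)) ∩
          (Set.range (fun x => x - T₁ x) + Set.range T₂)) ∧
      NearEq (Set.range fun x => x - T x)
        ((Set.range T₁ - Set.range T₂) ∩
          (Set.range (fun x => x - T₁ x) + Set.range (fun x => x - T₂ x))) := by
  refine ⟨nearEq_range_douglasRachford hT₁ hT₂ hb₁ hb₂ hT, ?_⟩
  have h := nearEq_range_douglasRachford hT₁ hT₂.id_sub hb₁ hb₂.id_sub
    (T := fun x => x - T x) fun x => by rw [hT]; module
  simpa only [sub_sub_cancel] using h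
end
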